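/- arXiv:2605.27987 — 6 statements merged into one kernel-verified Lean document; each statement's English description precedes it below -/
import Mathlib

section
/- Let T be an invertible self-map of a set X with a symmetry S, and let x ∈ Fix(S) be a periodic point of T of least period q. Then there exists an integer k with 0 < k < q and T^k(x) ∈ Fix(S) if and only if q is even; moreover, in that case the only such k is k = q/2, so the orbit of x meets Fix(S) in exactly the two points x and T^{q/2}(x). -/
/-!
STATEMENT 4: Let T be an invertible self-map of X with a symmetry S, and let
x ∈ Fix(S) be a periodic point of T of least period q.  Then there is k with
0 < k < q and T^k(x) ∈ Fix(S) iff q is even; moreover in that case the only such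
k is k = q/2, so the orbit meets Fix(S) exactly in x and T^{q/2}(x).
-/

theorem symmetric_periodic_orbit_on_fixed_set {X : Type*}
    (T : Equiv.Perm X) (S : X → X)
    (hS : S ∘ S = id) (hrev : ∀ z, S (T (S z)) = T.symm z)
    (x : X) (hx : S x = x)
    (q : ℕ) (hq : 0 < q) (hper : (T ^ q) x = x)
    (hleast : ∀ k, 0 < k → k < q → (T ^ k) x ≠ x) :
    ((∃ k, 0 < k ∧ k < q ∧ S ((T ^ k) x) = (T ^ k) x) ↔ Even q) ∧
    (∀ k, 0 < k → k < q → S ((T ^ k) x) = (T ^ k) x → k = q / 2) := by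
  have hSS : ∀ z, S (S z) = z := fun z => congrFun hS z
  -- S ∘ T^n ∘ S = (T⁻¹)^n
  have hA : ∀ (n : ℕ) (z : X), S ((T ^ n) (S z)) = ((T⁻¹ ^ n) z) := by
    intro n
    induction n with
    | zero => intro z; simpa using hSS z
    | succ n ih =>
      intro z
      have h1 : (T ^ (n + 1)) (S z) = (T ^ n) (T (S z)) := by
        rw [pow_succ]; rfl
      have h2 : T (S z) = S (S (T (S z))) := (hSS _).symm
      rw [h1, h2, ih, hrev]
      have : (T⁻¹ ^ (n + 1)) z = (T⁻¹ ^ n) (T⁻¹ z) := by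
        rw [pow_succ]; rfl
      rw [this]
      rfl
  have hB : ∀ n : ℕ, S ((T ^ n) x) = (T⁻¹ ^ n) x := by
    intro n
    calc S ((T ^ n) x) = S ((T ^ n) (S x)) := by rw [hx]
    _ = (T⁻¹ ^ n) x := hA n x
  have hC : ∀ k : ℕ, k ≤ q → (T⁻¹ ^ k) x = (T ^ (q - k)) x := by
    intro k hk
    apply (T ^ k).injective
    have h1 : (T ^ k) ((T⁻¹ ^ k) x) = x := by
      have : (T ^ k) * (T⁻¹ ^ k) = 1 := by
        rw [inv_pow]; group
      calc (T ^ k) ((T⁻¹ ^ k) x) = ((T ^ k) * (T⁻¹ ^ k)) x := rfl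
      _ = x := by rw [this]; rfl
    have h2 : (T ^ k) ((T ^ (q - k)) x) = x := by
      calc (T ^ k) ((T ^ (q - k)) x) = (T ^ (k + (q - k))) x := by
            rw [pow_add]; rfl
      _ = x := by rw [Nat.add_sub_cancel' hk]; exact hper
    rw [h1, h2]
  -- fixed-point of S on orbit forces 2k = q
  have key : ∀ k, 0 < k → k < q → S ((T ^ k) x) = (T ^ k) x → 2 * k = q := by
    intro k hk0 hkq hfix
    have h1 : (T ^ (q - k)) x = (T ^ k) x := by
      rw [← hC k hkq.le, ← hB k, hfix]
    by_cases hle : 2 * k ≤ q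
    · -- q - k = (q - 2k) + k
      have hsplit : q - k = (q - 2 * k) + k := by omega
      have h2 : (T ^ (q - 2 * k)) ((T ^ k) x) = (T ^ k) x := by
        calc (T ^ (q - 2 * k)) ((T ^ k) x) = (T ^ ((q - 2 * k) + k)) x := by
              rw [pow_add]; rfl
        _ = (T ^ k) x := by rw [← hsplit, h1]
      have h3 : (T ^ (q - 2 * k)) x = x := by
        apply (T ^ k).injective
        calc (T ^ k) ((T ^ (q - 2 * k)) x) = (T ^ (k + (q - 2 * k))) x := by
              rw [pow_add]; rfl
        _ = (T ^ ((q - 2 * k) + k)) x := by rw [add_comm]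
        _ = (T ^ (q - 2 * k)) ((T ^ k) x) := by rw [pow_add]; rfl
        _ = (T ^ k) x := h2
      by_contra hne
      have hpos : 0 < q - 2 * k := by omega
      exact hleast _ hpos (by omega) h3
    · -- 2k > q : k = (2k - q) + (q - k)
      push_neg at hle
      have h2 : (T ^ (2 * k - q)) ((T ^ (q - k)) x) = (T ^ (q - k)) x := by
        calc (T ^ (2 * k - q)) ((T ^ (q - k)) x)
            = (T ^ ((2 * k - q) + (q - k))) x := by rw [pow_add]; rfl
        _ = (T ^ k) x := by
              have hE : (2 * k - q) + (q - k) = k := by omega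
              rw [hE]
        _ = (T ^ (q - k)) x := h1.symm
      have h3 : (T ^ (2 * k - q)) x = x := by
        apply (T ^ (q - k)).injective
        calc (T ^ (q - k)) ((T ^ (2 * k - q)) x)
            = (T ^ ((q - k) + (2 * k - q))) x := by rw [pow_add]; rfl
        _ = (T ^ ((2 * k - q) + (q - k))) x := by rw [add_comm]
        _ = (T ^ (2 * k - q)) ((T ^ (q - k)) x) := by rw [pow_add]; rfl
        _ = (T ^ (q - k)) x := h2
      have hpos : 0 < 2 * k - q := by omega
      exact absurd h3 (hleast (2 * k - q) hpos (by omega : 2 * k - q < q))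
  constructor
  · constructor
    · rintro ⟨k, hk0, hkq, hfix⟩
      have := key k hk0 hkq hfix
      exact ⟨k, by omega⟩
    · rintro ⟨m, hm⟩
      refine ⟨q / 2, by omega, by omega, ?_⟩
      have hhalf : q / 2 ≤ q := Nat.div_le_self q 2
      have : q - q / 2 = q / 2 := by omega
      rw [hB, hC _ hhalf, this]
  · intro k hk0 hkq hfix
    have := key k hk0 hkq hfix
    omega
end

section
/- Let T be an invertible self-map of a set X with a symmetry S, and let x ∈ Fix(S) be a periodic point of T of least period q. Then q is odd if and only if there exists an integer k such that T^k(x) ∈ Fix(T ∘ S); moreover, when q is odd, the point T^{(q+1)/2}(x) lies in Fix(T ∘ S). -/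
/-!
STATEMENT 5: Let T be an invertible self-map of X with a symmetry S, and let
x ∈ Fix(S) be a periodic point of T of least period q.  Then q is odd iff some
orbit point T^k(x) lies in Fix(T ∘ S); moreover, when q is odd, the point
T^{(q+1)/2}(x) lies in Fix(T ∘ S).
-/

theorem odd_period_iff_orbit_meets_next_symmetry_line {X : Type*}
    (T : Equiv.Perm X) (S : X → X)
    (hS : S ∘ S = id) (hrev : ∀ z, S (T (S z)) = T.symm z)
    (x : X) (hx : S x = x)
    (q : ℕ) (hq : 0 < q) (hper : (T ^ q) x = x)
    (hleast : ∀ k, 0 < k → k < q → (T ^ k) x ≠ x) :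
    (Odd q ↔ ∃ k : ℕ, T (S ((T ^ k) x)) = (T ^ k) x) ∧
    (Odd q → T (S ((T ^ ((q + 1) / 2)) x)) = (T ^ ((q + 1) / 2)) x) := by
  -- S conjugates T to T⁻¹
  have hST : ∀ z, S (T z) = T.symm (S z) := by
    intro z
    have h1 : S (S z) = z := congrFun hS z
    have := hrev (S z)
    rwa [h1] at this
  -- S (T^n x) = (T.symm)^n x
  have key : ∀ n : ℕ, S ((T ^ n) x) = ((T.symm) ^ n) x := by
    intro n
    induction n with
    | zero => simpa using hx
    | succ n ih =>
        have h1 : (T ^ (n + 1)) x = T ((T ^ n) x) := by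
          rw [pow_succ' T n, Equiv.Perm.mul_apply]
        have h2 : ((T.symm) ^ (n + 1)) x = T.symm (((T.symm) ^ n) x) := by
          rw [pow_succ' T.symm n, Equiv.Perm.mul_apply]
        rw [h1, hST, ih, h2]
  -- (T.symm)^a x = T^b x when a + b = q
  have hinv : ∀ a b : ℕ, a + b = q → ((T.symm) ^ a) x = (T ^ b) x := by
    intro a b hab
    apply (T ^ a).injective
    have h1 : (T ^ a) (((T.symm) ^ a) x) = x := by
      have hone : (T ^ a) * ((T.symm) ^ a) = 1 := by
        have hsymm : T.symm = T⁻¹ := rfl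
        rw [hsymm, inv_pow, mul_inv_cancel]
      calc (T ^ a) (((T.symm) ^ a) x) = ((T ^ a) * ((T.symm) ^ a)) x := rfl
        _ = x := by rw [hone]; rfl
    have h2 : (T ^ a) ((T ^ b) x) = x := by
      calc (T ^ a) ((T ^ b) x) = (T ^ (a + b)) x := by
            rw [pow_add, Equiv.Perm.mul_apply]
        _ = x := by rw [hab, hper]
    rw [h1, h2]
  have hmulf : ∀ a : ℕ, (T ^ (q * a)) x = x := by
    intro a
    induction a with
    | zero => simp
    | succ a ih =>
        have h : (T ^ (q * (a + 1))) x = (T ^ q) ((T ^ (q * a)) x) := by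
          rw [← Equiv.Perm.mul_apply, ← pow_add]
          ring_nf
        rw [h, ih, hper]
  -- reduce exponents mod q
  have horb : ∀ m : ℕ, (T ^ m) x = (T ^ (m % q)) x := by
    intro m
    conv_lhs => rw [show m = m % q + q * (m / q) from by
      rw [Nat.add_comm]; exact (Nat.div_add_mod m q).symm]
    rw [pow_add, Equiv.Perm.mul_apply, hmulf]
  -- divisibility from least period
  have hdvd : ∀ m : ℕ, (T ^ m) x = x → q ∣ m := by
    intro m hm
    rw [horb m] at hm
    by_contra hnd
    have h1 : 0 < m % q := by
      rcases Nat.eq_zero_or_pos (m % q) with h | h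
      · exact absurd (Nat.dvd_of_mod_eq_zero h) hnd
      · exact h
    exact hleast (m % q) h1 (Nat.mod_lt m hq) hm
  -- the forward construction
  have hfwd : Odd q → T (S ((T ^ ((q + 1) / 2)) x)) = (T ^ ((q + 1) / 2)) x := by
    intro hodd
    obtain ⟨c, hc⟩ := hodd
    have hk2 : (q + 1) / 2 = c + 1 := by omega
    rw [hk2, key, hinv (c + 1) c (by omega)]
    rw [← Equiv.Perm.mul_apply, ← pow_succ']
  constructor
  · constructor
    · intro hodd
      exact ⟨(q + 1) / 2, hfwd hodd⟩
    · rintro ⟨k, hk⟩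
      by_cases hq1 : q = 1
      · rw [hq1]; exact odd_one
      have hq2 : 2 ≤ q := by omega
      rw [horb k] at hk
      set r := k % q with hr
      have hrlt : r < q := Nat.mod_lt k hq
      rw [key r, hinv r (q - r) (by omega)] at hk
      have hE : (T ^ (q - r + 1)) x = (T ^ r) x := by
        rw [pow_succ', Equiv.Perm.mul_apply]; exact hk
      rcases le_or_gt r (q - r + 1) with h | h
      · obtain ⟨c, hc⟩ : q ∣ (q - r + 1) - r := by
          apply hdvd
          apply (T ^ r).injective
          rw [← Equiv.Perm.mul_apply, ← pow_add,
            show r + ((q - r + 1) - r) = q - r + 1 from by omega, hE]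
        have hcle : q * c ≤ q + 1 := by omega
        have hc1 : c ≤ 1 := by nlinarith
        interval_cases c
        · -- 2r = q + 1
          exact ⟨r - 1, by omega⟩
        · -- q - 2r + 1 = q : impossible
          exfalso; omega
      · exfalso
        have hd : q ∣ r - (q - r + 1) := by
          apply hdvd
          apply (T ^ (q - r + 1)).injective
          rw [← Equiv.Perm.mul_apply, ← pow_add,
            show (q - r + 1) + (r - (q - r + 1)) = r from by omega]
          exact hE.symm
        have := Nat.le_of_dvd (by omega) hd
        omega
  · exact hfwd
end

section
/- Let G be a d-IEM on [0,1) with elemental subintervals J_1, …, J_d of lengths λ_1, …, λ_d, having no degenerate discontinuity point (no two consecutive subintervals are translated by the same amount). Then G is reversible with respect to the circle reflection R (i.e. R(G(x)) = G⁻¹(R(x)) for all x in the interiors of the elemental subintervals) if and only if there exists an involutive permutation σ of {1,…,d} with λ_{σ(i)} = λ_i for all i such that, letting W be the IEM (a 'swap') that translates each J_i onto J_{σ(i)}, the composition F := G ∘ W⁻¹ is a symmetric IEM. In other words, G is reversible if and only if G is the composition of a symmetric IEM with a swap of some of its equal-length subintervals. -/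
/-!
STATEMENT 9: A d-IEM G on [0,1) with no degenerate discontinuity point is
reversible with respect to the circle reflection R if and only if G is the
composition of a symmetric IEM with a swap of some of its equal-length
subintervals: there is an involutive permutation σ of {1,…,d} with
λ_{σ(i)} = λ_i such that, letting W be the swap translating J_i onto J_{σ(i)},
the map F := G ∘ W⁻¹ is a symmetric IEM.
-/

noncomputable section

/-- `beta lam i` is the partial sum of the first `i` lengths, i.e. `β_i = λ_1 + ⋯ + λ_i`. -/
def beta {d : ℕ} (lam : Fin d → ℝ) (i : ℕ) : ℝ :=
  ∑ j : Fin d, if (j : ℕ) < i then lam j else 0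

/-- Left endpoint of the image of the subinterval sent by `π` to final position `k`. -/
def betaIm {d : ℕ} (lam : Fin d → ℝ) (π : Equiv.Perm (Fin d)) (k : ℕ) : ℝ :=
  ∑ j : Fin d, if ((π j : ℕ)) < k then lam j else 0

/-- `F` is the interval exchange map of `[0,1)` with (positive) lengths `lam`
(summing to `1`) and permutation `π`. -/
structure IsIEM {d : ℕ} (lam : Fin d → ℝ) (π : Equiv.Perm (Fin d)) (F : ℝ → ℝ) : Prop where
  pos : ∀ i, 0 < lam i
  sum_one : ∑ i, lam i = 1
  translate : ∀ i : Fin d, ∀ x ∈ Set.Ico (beta lam i.val) (beta lam (i.val + 1)),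
      F x = x + (betaIm lam π (π i).val - beta lam i.val)
  bij : Set.BijOn F (Set.Ico 0 1) (Set.Ico 0 1)

/-- The circle reflection `R(x) = −x mod 1` on `[0,1)`: `R(0) = 0`, `R(x) = 1 − x` else. -/
def circRefl (x : ℝ) : ℝ := if x = 0 then 0 else 1 - x

namespace IEMaux

variable {d : ℕ} {lam : Fin d → ℝ} {π : Equiv.Perm (Fin d)} {n : ℕ}

lemma ioo_sub_ico {a b c e : ℝ} (hab : a < b) (h : Set.Ioo a b ⊆ Set.Ico c e) :
    c ≤ a ∧ b ≤ e := by
  constructor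
  · by_contra hc
    push_neg at hc
    have hm : a < min b c := lt_min hab hc
    have h1 : a < (a + min b c)/2 := by linarith
    have h2 : (a + min b c)/2 < b := by have := min_le_left b c; linarith
    have h3 : (a + min b c)/2 < c := by have := min_le_right b c; linarith
    exact absurd (h ⟨h1, h2⟩).1 (not_le.2 h3)
  · by_contra he
    push_neg at he
    have hm : max a e < b := max_lt hab he
    have h1 : a < (max a e + b)/2 := by have := le_max_left a e; linarith
    have h2 : (max a e + b)/2 < b := by linarith
    have h3 : e < (max a e + b)/2 := by have := le_max_right a e; linarith
    exact absurd (h ⟨h1, h2⟩).2 (not_lt.2 h3.le)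

lemma beta_nonneg (hpos : ∀ i, 0 < lam i) (n : ℕ) : 0 ≤ beta lam n := by
  apply Finset.sum_nonneg
  intro j _
  split
  · exact (hpos j).le
  · exact le_refl 0

lemma beta_mono (hpos : ∀ i, 0 < lam i) : Monotone (beta lam) := by
  intro m n hmn
  apply Finset.sum_le_sum
  intro j _
  by_cases h : (j : ℕ) < m
  · rw [if_pos h, if_pos (lt_of_lt_of_le h hmn)]
  · rw [if_neg h]
    split
    · exact (hpos j).le
    · exact le_refl 0

lemma beta_zero : beta lam 0 = 0 := by
  unfold beta; simp

lemma beta_of_ge (hn : d ≤ n) : beta lam n = ∑ i, lam i := by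
  unfold beta
  apply Finset.sum_congr rfl
  intro j _
  rw [if_pos (lt_of_lt_of_le j.isLt hn)]

lemma beta_le_sum (hpos : ∀ i, 0 < lam i) (n : ℕ) : beta lam n ≤ ∑ i, lam i := by
  apply Finset.sum_le_sum
  intro j _
  split
  · exact le_refl _
  · exact (hpos j).le

lemma beta_succ (hn : n < d) : beta lam (n+1) = beta lam n + lam ⟨n, hn⟩ := by
  unfold beta
  have key : ∀ j : Fin d, (if (j : ℕ) < n + 1 then lam j else 0)
      = (if (j : ℕ) < n then lam j else 0) + (if j = ⟨n, hn⟩ then lam j else 0) := by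
    intro j
    rcases lt_trichotomy (j : ℕ) n with h | h | h
    · rw [if_pos (Nat.lt_succ_of_lt h), if_pos h,
        if_neg (by simp [Fin.ext_iff]; omega), add_zero]
    · rw [if_pos (by omega), if_neg (by omega), if_pos (by simp [Fin.ext_iff, h]), zero_add]
    · rw [if_neg (by omega), if_neg (by omega), if_neg (by simp [Fin.ext_iff]; omega), add_zero]
  rw [Finset.sum_congr rfl (fun j _ => key j), Finset.sum_add_distrib,
    Finset.sum_ite_eq' Finset.univ (⟨n, hn⟩ : Fin d) lam, if_pos (Finset.mem_univ _)]

lemma beta_succ' (_hpos : ∀ i, 0 < lam i) (i : Fin d) :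
    beta lam ((i : ℕ) + 1) = beta lam (i : ℕ) + lam i := by
  rw [beta_succ i.isLt, Fin.eta]

lemma betaIm_succ (i : Fin d) :
    betaIm lam π ((π i : ℕ) + 1) = betaIm lam π (π i : ℕ) + lam i := by
  unfold betaIm
  have key : ∀ j : Fin d, (if (π j : ℕ) < (π i : ℕ) + 1 then lam j else 0)
      = (if (π j : ℕ) < (π i : ℕ) then lam j else 0) + (if j = i then lam j else 0) := by
    intro j
    have hji : (π j : ℕ) = (π i : ℕ) ↔ j = i := by
      constructor
      · intro h; exact π.injective (Fin.ext h)
      · intro h; rw [h]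
    rcases lt_trichotomy ((π j : ℕ)) ((π i : ℕ)) with h | h | h
    · rw [if_pos (Nat.lt_succ_of_lt h), if_pos h, if_neg (by rw [← hji]; omega), add_zero]
    · rw [if_pos (by omega), if_neg (by omega), if_pos (hji.mp h), zero_add]
    · rw [if_neg (by omega), if_neg (by omega), if_neg (by rw [← hji]; omega), add_zero]
  rw [Finset.sum_congr rfl (fun j _ => key j), Finset.sum_add_distrib,
    Finset.sum_ite_eq' Finset.univ i lam, if_pos (Finset.mem_univ _)]

lemma betaIm_nonneg (hpos : ∀ i, 0 < lam i) (n : ℕ) : 0 ≤ betaIm lam π n := by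
  apply Finset.sum_nonneg
  intro j _
  split
  · exact (hpos j).le
  · exact le_refl 0

lemma betaIm_le_sum (hpos : ∀ i, 0 < lam i) (n : ℕ) : betaIm lam π n ≤ ∑ i, lam i := by
  apply Finset.sum_le_sum
  intro j _
  split
  · exact le_refl _
  · exact (hpos j).le

lemma exists_mem (_hpos : ∀ i, 0 < lam i) (hsum : ∑ i, lam i = 1)
    {u : ℝ} (h0 : 0 ≤ u) (h1 : u < 1) :
    ∃ j : Fin d, u ∈ Set.Ico (beta lam (j : ℕ)) (beta lam ((j : ℕ) + 1)) := by
  have main : ∀ n : ℕ, u < beta lam n →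
      ∃ j : Fin d, u ∈ Set.Ico (beta lam (j : ℕ)) (beta lam ((j : ℕ) + 1)) := by
    intro n
    induction n with
    | zero => intro h; rw [beta_zero] at h; linarith
    | succ n ih =>
      intro h
      by_cases hn : u < beta lam n
      · exact ih hn
      · push_neg at hn
        have hnd : n < d := by
          by_contra hge
          push_neg at hge
          rw [beta_of_ge (by omega), hsum] at h
          rw [beta_of_ge hge, hsum] at hn
          linarith
        exact ⟨⟨n, hnd⟩, hn, h⟩
  apply main d
  rw [beta_of_ge (le_refl d), hsum]
  exact h1

lemma mem_unique (hpos : ∀ i, 0 < lam i) {j k : Fin d} {u : ℝ}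
    (hj : u ∈ Set.Ico (beta lam (j : ℕ)) (beta lam ((j : ℕ) + 1)))
    (hk : u ∈ Set.Ico (beta lam (k : ℕ)) (beta lam ((k : ℕ) + 1))) : j = k := by
  rcases lt_trichotomy (j : ℕ) (k : ℕ) with h | h | h
  · have := beta_mono hpos (show (j : ℕ) + 1 ≤ (k : ℕ) by omega)
    exact absurd (lt_of_lt_of_le hj.2 (this.trans hk.1)) (lt_irrefl u)
  · exact Fin.ext h
  · have := beta_mono hpos (show (k : ℕ) + 1 ≤ (j : ℕ) by omega)
    exact absurd (lt_of_lt_of_le hk.2 (this.trans hj.1)) (lt_irrefl u)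

end IEMaux

open IEMaux in
/-- An IEM `G` without degenerate discontinuities is reversible w.r.t. the circle
reflection iff it is a symmetric IEM composed with a swap of equal-length subintervals.
The swap `W` translates `J_i` onto `J_{σ i}` (so `W⁻¹ x = x + (β_{σ i − 1} − β_{i-1})`
for `x ∈ J_i`), and the last condition states that `F := G ∘ W⁻¹` is the symmetric IEM
with lengths `lam`, i.e. `F x = x + (1 − β_i − β_{i-1})` on `J_i`. -/
theorem reversible_iff_symmetric_comp_swap
    {d : ℕ} (lam : Fin d → ℝ) (π : Equiv.Perm (Fin d)) (G : ℝ → ℝ)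
    (hG : IsIEM lam π G)
    (hnodeg : ∀ i j : Fin d, (j : ℕ) = (i : ℕ) + 1 →
      betaIm lam π (π i).val - beta lam i.val ≠ betaIm lam π (π j).val - beta lam j.val) :
    (∀ i : Fin d, ∀ x ∈ Set.Ioo (beta lam i.val) (beta lam (i.val + 1)),
        circRefl (G x) = Function.invFunOn G (Set.Ico 0 1) (circRefl x))
    ↔
    (∃ σ : Equiv.Perm (Fin d),
        (∀ i, σ (σ i) = i) ∧ (∀ i, lam (σ i) = lam i) ∧
        (∀ i : Fin d, ∀ x ∈ Set.Ico (beta lam i.val) (beta lam (i.val + 1)),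
          G (x + (beta lam (σ i).val - beta lam i.val))
            = x + (1 - beta lam (i.val + 1) - beta lam i.val))) := by
  have hpos := hG.pos
  have hsum := hG.sum_one
  have hB0 : ∀ n : ℕ, 0 ≤ beta lam n := beta_nonneg hpos
  have hB1 : ∀ n : ℕ, beta lam n ≤ 1 := fun n => by
    have := beta_le_sum hpos (lam := lam) n; rw [hsum] at this; exact this
  have hBs : ∀ i : Fin d, beta lam ((i : ℕ) + 1) = beta lam (i : ℕ) + lam i :=
    beta_succ' hpos
  have hI0 : ∀ n : ℕ, 0 ≤ betaIm lam π n := betaIm_nonneg hpos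
  have hI1 : ∀ i : Fin d, betaIm lam π (π i : ℕ) + lam i ≤ 1 := fun i => by
    rw [← betaIm_succ i]
    have := betaIm_le_sum (π := π) hpos ((π i : ℕ) + 1); rw [hsum] at this; exact this
  constructor
  · -- forward direction
    intro hrev
    -- Step A
    have stepA : ∀ i : Fin d, ∀ u ∈ Set.Ioo (1 - betaIm lam π (π i : ℕ) - lam i)
        (1 - betaIm lam π (π i : ℕ)),
        G u = u + (betaIm lam π (π i).val - beta lam i.val) := by
      intro i u hu
      obtain ⟨hu1, hu2⟩ := hu
      set x : ℝ := 1 - u - (betaIm lam π (π i).val - beta lam i.val) with hx_def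
      have hxmem : x ∈ Set.Ioo (beta lam (i : ℕ)) (beta lam ((i : ℕ) + 1)) := by
        rw [hBs i]
        constructor
        · simp only [hx_def]; linarith
        · simp only [hx_def]; linarith
      have hx0 : 0 < x := lt_of_le_of_lt (hB0 _) hxmem.1
      have hx1 : x < 1 := lt_of_lt_of_le hxmem.2 (hB1 _)
      have hGx : G x = 1 - u := by
        rw [hG.translate i x ⟨hxmem.1.le, hxmem.2⟩]
        simp only [hx_def]; ring
      have hu1' : u < 1 := by have := hI0 (π i : ℕ); linarith
      have hrev1 := hrev i x hxmem
      rw [hGx] at hrev1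
      have hcg : circRefl (1 - u) = u := by
        rw [circRefl, if_neg (by intro h; linarith)]; ring
      have hcx : circRefl x = 1 - x := by
        rw [circRefl, if_neg (by intro h; linarith)]
      rw [hcg, hcx] at hrev1
      have h1x : (1 - x) ∈ Set.Ico (0 : ℝ) 1 := ⟨by linarith, by linarith⟩
      obtain ⟨w, hw, hGw⟩ := hG.bij.surjOn h1x
      have hGu : G u = 1 - x := by
        rw [hrev1]
        exact Function.invFunOn_eq ⟨w, hw, hGw⟩
      rw [hGu]
      simp only [hx_def]; ring
    -- same subinterval lemma
    have sameJ : ∀ i : Fin d, ∀ u v : ℝ, ∀ k l : Fin d,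
        u ∈ Set.Ioo (1 - betaIm lam π (π i : ℕ) - lam i) (1 - betaIm lam π (π i : ℕ)) →
        v ∈ Set.Ioo (1 - betaIm lam π (π i : ℕ) - lam i) (1 - betaIm lam π (π i : ℕ)) →
        u ∈ Set.Ico (beta lam (k : ℕ)) (beta lam ((k : ℕ) + 1)) →
        v ∈ Set.Ico (beta lam (l : ℕ)) (beta lam ((l : ℕ) + 1)) → k = l := by
      have aux : ∀ i : Fin d, ∀ u v : ℝ, ∀ k l : Fin d,
          u ∈ Set.Ioo (1 - betaIm lam π (π i : ℕ) - lam i) (1 - betaIm lam π (π i : ℕ)) →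
          v ∈ Set.Ioo (1 - betaIm lam π (π i : ℕ) - lam i) (1 - betaIm lam π (π i : ℕ)) →
          u ∈ Set.Ico (beta lam (k : ℕ)) (beta lam ((k : ℕ) + 1)) →
          v ∈ Set.Ico (beta lam (l : ℕ)) (beta lam ((l : ℕ) + 1)) →
          (k : ℕ) < (l : ℕ) → False := by
        intro i u v k l hu hv hk hl hkl
        have hkd : (k : ℕ) + 1 < d := by omega
        set k' : Fin d := ⟨(k : ℕ) + 1, hkd⟩ with hk'_def
        have hcv : beta lam ((k : ℕ) + 1) ≤ v := le_trans (beta_mono hpos (by omega)) hl.1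
        have hcmem : beta lam ((k : ℕ) + 1) ∈
            Set.Ioo (1 - betaIm lam π (π i : ℕ) - lam i) (1 - betaIm lam π (π i : ℕ)) :=
          ⟨lt_trans hu.1 hk.2, lt_of_le_of_lt hcv hv.2⟩
        have hcJ : beta lam ((k : ℕ) + 1) ∈
            Set.Ico (beta lam (k' : ℕ)) (beta lam ((k' : ℕ) + 1)) := by
          constructor
          · exact le_refl _
          · rw [hBs k']
            have := hpos k'
            show beta lam ((k : ℕ) + 1) < beta lam (k' : ℕ) + lam k'
            linarith
        have htk : betaIm lam π (π k).val - beta lam k.val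
            = betaIm lam π (π i).val - beta lam i.val := by
          have h1 := stepA i u hu
          have h2 := hG.translate k u hk
          rw [h2] at h1
          linarith
        have htk' : betaIm lam π (π k').val - beta lam k'.val
            = betaIm lam π (π i).val - beta lam i.val := by
          have h1 := stepA i _ hcmem
          have h2 := hG.translate k' _ hcJ
          rw [h2] at h1
          linarith
        exact hnodeg k k' rfl (htk.trans htk'.symm)
      intro i u v k l hu hv hk hl
      rcases lt_trichotomy (k : ℕ) (l : ℕ) with h | h | h
      · exact absurd (aux i u v k l hu hv hk hl h) not_false
      · exact Fin.ext h
      · exact absurd (aux i v u l k hv hu hl hk h) not_false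
    -- Step B : localization
    have stepB : ∀ i : Fin d, ∃ j : Fin d,
        (Set.Ioo (1 - betaIm lam π (π i : ℕ) - lam i) (1 - betaIm lam π (π i : ℕ)) ⊆
          Set.Ico (beta lam (j : ℕ)) (beta lam ((j : ℕ) + 1))) ∧
        betaIm lam π (π j).val - beta lam j.val
          = betaIm lam π (π i).val - beta lam i.val := by
      intro i
      have hlpos := hpos i
      have ha0 : (0:ℝ) ≤ 1 - betaIm lam π (π i : ℕ) - lam i := by
        have := hI1 i; linarith
      have ha1 : 1 - betaIm lam π (π i : ℕ) ≤ 1 := by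
        have := hI0 (π i : ℕ); linarith
      set m : ℝ := 1 - betaIm lam π (π i : ℕ) - lam i / 2 with hm_def
      have hmmem : m ∈ Set.Ioo (1 - betaIm lam π (π i : ℕ) - lam i)
          (1 - betaIm lam π (π i : ℕ)) := by
        constructor <;> (simp only [hm_def]; linarith)
      obtain ⟨j, hj⟩ := exists_mem hpos hsum
        (show (0:ℝ) ≤ m by simp only [hm_def]; linarith)
        (show m < 1 by simp only [hm_def]; linarith)
      refine ⟨j, ?_, ?_⟩
      · intro u hu
        obtain ⟨k, hk⟩ := exists_mem hpos hsum
          (show (0:ℝ) ≤ u by have := hu.1; linarith)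
          (show u < 1 by have := hu.2; linarith)
        rwa [sameJ i u m k j hu hmmem hk hj] at hk
      · have h1 := stepA i m hmmem
        have h2 := hG.translate j m hj
        rw [h2] at h1
        linarith
    -- define σ'
    set σ' : Fin d → Fin d := fun i => (stepB i).choose with hσ'_def
    have hP1 : ∀ i : Fin d,
        Set.Ioo (1 - betaIm lam π (π i : ℕ) - lam i) (1 - betaIm lam π (π i : ℕ)) ⊆
        Set.Ico (beta lam (σ' i : ℕ)) (beta lam ((σ' i : ℕ) + 1)) :=
      fun i => (stepB i).choose_spec.1
    have hP2 : ∀ i : Fin d, betaIm lam π (π (σ' i)).val - beta lam (σ' i).val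
        = betaIm lam π (π i).val - beta lam i.val := fun i => (stepB i).choose_spec.2
    have hbounds : ∀ i : Fin d,
        beta lam (σ' i : ℕ) ≤ 1 - betaIm lam π (π i : ℕ) - lam i ∧
        1 - betaIm lam π (π i : ℕ) ≤ beta lam ((σ' i : ℕ) + 1) := fun i =>
      ioo_sub_ico (by have := hpos i; linarith) (hP1 i)
    -- involution
    have hinvol : ∀ i, σ' (σ' i) = i := by
      intro i
      have hlo := (hbounds i).1
      have hhi := (hbounds i).2
      have htji := hP2 i
      have hlpos := hpos i
      set v : ℝ := 1 - betaIm lam π (π i : ℕ) - lam i / 2 with hv_def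
      have hvmem : v ∈ Set.Ioo (1 - betaIm lam π (π i : ℕ) - lam i)
          (1 - betaIm lam π (π i : ℕ)) := by
        constructor <;> (simp only [hv_def]; linarith)
      set w : ℝ := 1 - v - (betaIm lam π (π (σ' i)).val - beta lam (σ' i).val) with hw_def
      have hwJi : w ∈ Set.Ico (beta lam (i : ℕ)) (beta lam ((i : ℕ) + 1)) := by
        rw [hBs i]
        have h1 : v < 1 - betaIm lam π (π i : ℕ) := hvmem.2
        have h2 : 1 - betaIm lam π (π i : ℕ) - lam i < v := hvmem.1
        constructor
        · simp only [hw_def, htji]; linarith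
        · simp only [hw_def, htji]; linarith
      have hwIoo : w ∈ Set.Ioo (1 - betaIm lam π (π (σ' i) : ℕ) - lam (σ' i))
          (1 - betaIm lam π (π (σ' i) : ℕ)) := by
        have hBj := hBs (σ' i)
        have h1 : v < beta lam ((σ' i : ℕ) + 1) := lt_of_lt_of_le hvmem.2 hhi
        have h2 : beta lam (σ' i : ℕ) < v := lt_of_le_of_lt hlo hvmem.1
        constructor
        · simp only [hw_def]; linarith
        · simp only [hw_def]; linarith
      have hwJσj := hP1 (σ' i) hwIoo
      exact mem_unique hpos hwJσj hwJi
    -- equal lengths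
    have hle : ∀ i, lam i ≤ lam (σ' i) := by
      intro i
      have h1 := (hbounds i).1
      have h2 := (hbounds i).2
      have h3 := hBs (σ' i)
      linarith
    have hlam' : ∀ i, lam (σ' i) = lam i := by
      intro i
      have h1 := hle i
      have h2 := hle (σ' i)
      rw [hinvol i] at h2
      linarith
    have heqa : ∀ i, 1 - betaIm lam π (π i : ℕ) - lam i = beta lam (σ' i : ℕ) := by
      intro i
      have h1 := (hbounds i).1
      have h2 := (hbounds i).2
      have h3 := hBs (σ' i)
      have h4 := hlam' i
      linarith
    refine ⟨Function.Involutive.toPerm σ' hinvol, hinvol, hlam', ?_⟩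
    intro i x hx
    show G (x + (beta lam (σ' i : ℕ) - beta lam (i : ℕ)))
        = x + (1 - beta lam ((i : ℕ) + 1) - beta lam (i : ℕ))
    set y : ℝ := x + (beta lam (σ' i : ℕ) - beta lam (i : ℕ)) with hy_def
    have hymem : y ∈ Set.Ico (beta lam (σ' i : ℕ)) (beta lam ((σ' i : ℕ) + 1)) := by
      have hBi := hBs i
      have hBσ := hBs (σ' i)
      have h4 := hlam' i
      constructor
      · have := hx.1; simp only [hy_def]; linarith
      · have := hx.2; simp only [hy_def]; linarith
    have hGy := hG.translate (σ' i) y hymem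
    rw [hGy]
    have h5 := hP2 i
    have h6 := heqa i
    have hBi := hBs i
    simp only [hy_def, h5]
    linarith
  · -- reverse direction
    rintro ⟨σ, hinv, hlam, hform⟩ i x hx
    have htσ : ∀ i' : Fin d, betaIm lam π (π (σ i') : ℕ) - beta lam (σ i' : ℕ)
        = 1 - beta lam ((i' : ℕ) + 1) - beta lam (σ i' : ℕ) := by
      intro i'
      have hBmem : beta lam (i' : ℕ) ∈
          Set.Ico (beta lam (i' : ℕ)) (beta lam ((i' : ℕ) + 1)) := by
        constructor
        · exact le_refl _
        · rw [hBs i']; have := hpos i'; linarith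
      have h1 := hform i' (beta lam (i' : ℕ)) hBmem
      have harg : beta lam (i' : ℕ) + (beta lam (σ i' : ℕ) - beta lam (i' : ℕ))
          = beta lam (σ i' : ℕ) := by ring
      rw [harg] at h1
      have hBσmem : beta lam (σ i' : ℕ) ∈
          Set.Ico (beta lam (σ i' : ℕ)) (beta lam ((σ i' : ℕ) + 1)) := by
        constructor
        · exact le_refl _
        · rw [hBs (σ i')]; have := hpos (σ i'); linarith
      have h2 := hG.translate (σ i') _ hBσmem
      rw [h2] at h1
      linarith
    have ht' : betaIm lam π (π i : ℕ) - beta lam (i : ℕ)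
        = 1 - beta lam ((σ i : ℕ) + 1) - beta lam (i : ℕ) := by
      have := htσ (σ i)
      rw [hinv i] at this
      exact this
    have hGx := hG.translate i x ⟨hx.1.le, hx.2⟩
    have hGxpos : 0 < G x := by
      rw [hGx]
      have h1 := hI0 (π i : ℕ)
      have h2 := hx.1
      have h3 := hB0 (i : ℕ)
      linarith
    set y : ℝ := beta lam ((σ i : ℕ) + 1) + beta lam (i : ℕ) - x with hy_def
    have hymem : y ∈ Set.Ioo (beta lam (σ i : ℕ)) (beta lam ((σ i : ℕ) + 1)) := by
      have hBσ := hBs (σ i)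
      have hBi := hBs i
      have h4 := hlam i
      constructor
      · have := hx.2; simp only [hy_def]; linarith
      · have := hx.1; simp only [hy_def]; linarith
    have hGy : G y = 1 - x := by
      have h2 := hG.translate (σ i) y ⟨hymem.1.le, hymem.2⟩
      rw [h2, htσ i]
      have hBσ := hBs (σ i)
      have hBi := hBs i
      have h4 := hlam i
      simp only [hy_def]
      linarith
    have hcGx : circRefl (G x) = y := by
      rw [circRefl, if_neg (by intro h; linarith)]
      rw [hGx, ht']
      simp only [hy_def]
      linarith
    have hx0 : 0 < x := lt_of_le_of_lt (hB0 _) hx.1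
    have hx1 : x < 1 := lt_of_lt_of_le hx.2 (hB1 _)
    have hcx : circRefl x = 1 - x := by
      rw [circRefl, if_neg (by intro h; linarith)]
    rw [hcGx, hcx]
    have hy01 : y ∈ Set.Ico (0 : ℝ) 1 := by
      constructor
      · have h1 := hB0 (σ i : ℕ); have := hymem.1; linarith
      · have h1 := hB1 ((σ i : ℕ) + 1); have := hymem.2; linarith
    have hex : ∃ z ∈ Set.Ico (0 : ℝ) 1, G z = 1 - x := ⟨y, hy01, hGy⟩
    have hzmem := Function.invFunOn_mem hex
    have hzeq := Function.invFunOn_eq hex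
    exact hG.bij.injOn hy01 hzmem (by rw [hGy, hzeq])

end
end

section
/- A symmetric d-IEM cannot have a non-symmetric periodic interval: if F is a symmetric d-IEM on [0,1) and J is a q-periodic interval of F, then there exists k with 0 ≤ k < q such that, up to a finite set of points, R(J) = F^k(J). In particular every periodic interval of a symmetric IEM is symmetric. -/
/-!
STATEMENT 11: A symmetric d-IEM cannot have a non-symmetric periodic interval:
if F is a symmetric d-IEM on [0,1) and J is a q-periodic interval of F, then
there is 0 ≤ k < q such that, up to a finite set of points, R(J) = F^k(J).
-/

noncomputable section

/-- `F` is the symmetric interval exchange map of `[0,1)` with (positive) lengths `lam`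
summing to `1`: it translates each elemental subinterval `J_i = [β_{i-1}, β_i)` onto
`[1 − β_i, 1 − β_{i-1})`, reversing the order of the subintervals. -/
structure IsSymmIEM {d : ℕ} (lam : Fin d → ℝ) (F : ℝ → ℝ) : Prop where
  pos : ∀ i, 0 < lam i
  sum_one : ∑ i, lam i = 1
  translate : ∀ i : Fin d, ∀ x ∈ Set.Ico (beta lam i.val) (beta lam (i.val + 1)),
      F x = x + (1 - beta lam (i.val + 1) - beta lam i.val)
  bij : Set.BijOn F (Set.Ico 0 1) (Set.Ico 0 1)

/-- Two sets of reals agree up to a finite set of points. -/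
def EqUpToFinite (A B : Set ℝ) : Prop := Set.Finite ((A \ B) ∪ (B \ A))

/-- The set `A` is contained in a single elemental subinterval. -/
def InElem {d : ℕ} (lam : Fin d → ℝ) (A : Set ℝ) : Prop :=
  ∃ i : Fin d, A ⊆ Set.Ico (beta lam i.val) (beta lam (i.val + 1))

/-- `F^q(J) = J` and every interval along the orbit is inside an elemental subinterval. -/
def PerAux {d : ℕ} (lam : Fin d → ℝ) (F : ℝ → ℝ) (q : ℕ) (J : Set ℝ) : Prop :=
  F^[q] '' J = J ∧ ∀ k < q, InElem lam (F^[k] '' J)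

/-- `[a,b)` is a periodic interval of period `q` of the IEM `F`. -/
def IsPeriodicInterval {d : ℕ} (lam : Fin d → ℝ) (F : ℝ → ℝ) (q : ℕ) (a b : ℝ) : Prop :=
  0 ≤ a ∧ a < b ∧ b ≤ 1 ∧ 0 < q ∧
  PerAux lam F q (Set.Ico a b) ∧
  (∀ q', 0 < q' → PerAux lam F q' (Set.Ico a b) → q ≤ q') ∧
  (∀ a' b', Set.Ico a b ⊆ Set.Ico a' b' → PerAux lam F q (Set.Ico a' b') →
      Set.Ico a' b' = Set.Ico a b)

section helpers

variable {d : ℕ} {lam : Fin d → ℝ} {F : ℝ → ℝ}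

lemma beta_mono (hpos : ∀ i, 0 < lam i) : Monotone (beta lam) := by
  intro i j hij
  apply Finset.sum_le_sum
  intro k _
  by_cases h : (k : ℕ) < i
  · rw [if_pos h, if_pos (lt_of_lt_of_le h hij)]
  · rw [if_neg h]
    by_cases h' : (k : ℕ) < j
    · rw [if_pos h']; exact (hpos k).le
    · rw [if_neg h']

lemma elem_eq (hpos : ∀ i, 0 < lam i) {i i' : Fin d} {z : ℝ}
    (h : z ∈ Set.Ico (beta lam i.val) (beta lam (i.val + 1)))
    (h' : z ∈ Set.Ico (beta lam i'.val) (beta lam (i'.val + 1))) : i = i' := by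
  rcases lt_trichotomy i i' with hlt | heq | hgt
  · exfalso
    have h1 : beta lam (i.val + 1) ≤ beta lam i'.val :=
      beta_mono hpos (by exact_mod_cast Nat.succ_le_of_lt hlt)
    exact absurd (lt_of_lt_of_le h.2 (le_trans h1 h'.1)) (lt_irrefl z)
  · exact heq
  · exfalso
    have h1 : beta lam (i'.val + 1) ≤ beta lam i.val :=
      beta_mono hpos (by exact_mod_cast Nat.succ_le_of_lt hgt)
    exact absurd (lt_of_lt_of_le h'.2 (le_trans h1 h.1)) (lt_irrefl z)

lemma image_Ico_of_subset (hF : IsSymmIEM lam F) (i : Fin d) (u v : ℝ)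
    (hsub : Set.Ico u v ⊆ Set.Ico (beta lam i.val) (beta lam (i.val + 1))) :
    F '' Set.Ico u v
      = Set.Ico (u + (1 - beta lam (i.val + 1) - beta lam i.val))
               (v + (1 - beta lam (i.val + 1) - beta lam i.val)) := by
  have h : F '' Set.Ico u v
      = (fun x => x + (1 - beta lam (i.val + 1) - beta lam i.val)) '' Set.Ico u v := by
    apply Set.image_congr
    intro x hx
    exact hF.translate i x (hsub hx)
  rw [h, Set.image_add_const_Ico]

end helpers

open scoped Classical in
/-- Core combinatorial lemma: a cyclic word whose "positions" carry an injective real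
key that is monotone in the letters and anti-monotone after one shift is reversible. -/
theorem reversible_of_antitone {q d : ℕ} [NeZero q] (W : ZMod q → Fin d) (TT : ZMod q → ℝ)
    (hL1 : ∀ x y, W x < W y → TT x < TT y)
    (hL2 : ∀ x y, W x < W y → TT (y + 1) < TT (x + 1))
    (hL3 : ∀ x y, W x = W y → (TT x < TT y ↔ TT (x + 1) < TT (y + 1)))
    (hTinj : ∀ x y, TT x = TT y → x = y) :
    ∃ cc : ZMod q, ∀ x, W (cc - x) = W x := by
  have hq : 0 < q := Nat.pos_of_ne_zero (NeZero.ne q)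
  have hcardu : (Finset.univ : Finset (ZMod q)).card = q := by
    rw [Finset.card_univ, ZMod.card]
  -- I1 : global rank from below splits as (smaller letters) + (class rank from below)
  have hI1 : ∀ x : ZMod q, (Finset.univ.filter fun m => TT m < TT x).card
      = (Finset.univ.filter fun m => W m < W x).card
        + (Finset.univ.filter fun m => W m = W x ∧ TT m < TT x).card := by
    intro x
    have hset : (Finset.univ.filter fun m => TT m < TT x)
        = (Finset.univ.filter fun m => W m < W x)
          ∪ (Finset.univ.filter fun m => W m = W x ∧ TT m < TT x) := by
      ext m
      simp only [Finset.mem_filter, Finset.mem_union, Finset.mem_univ, true_and]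
      constructor
      · intro hm
        rcases lt_trichotomy (W m) (W x) with h | h | h
        · exact Or.inl h
        · exact Or.inr ⟨h, hm⟩
        · exact absurd (hL1 x m h) (by linarith)
      · rintro (h | ⟨h1, h2⟩)
        · exact hL1 m x h
        · exact h2
    rw [hset, Finset.card_union_of_disjoint]
    rw [Finset.disjoint_filter]
    intro m _ h1 h2
    exact absurd h2.1 (ne_of_lt h1)
  -- I3 : below-rank + above-rank + 1 = q
  have hI3 : ∀ x : ZMod q, (Finset.univ.filter fun m => TT m < TT x).card
      + (Finset.univ.filter fun m => TT x < TT m).card + 1 = q := by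
    intro x
    have e1 := Finset.card_filter_add_card_filter_not
      (s := (Finset.univ : Finset (ZMod q))) (p := fun m => TT m < TT x)
    have e2 : Finset.univ.filter (fun m => ¬ TT m < TT x)
        = insert x (Finset.univ.filter fun m => TT x < TT m) := by
      ext m
      simp only [Finset.mem_filter, Finset.mem_insert, Finset.mem_univ, true_and, not_lt]
      constructor
      · intro hm
        rcases eq_or_lt_of_le hm with h | h
        · exact Or.inl (hTinj m x h.symm)
        · exact Or.inr h
      · rintro (rfl | h)
        · exact le_refl _
        · exact h.le
    rw [e2, Finset.card_insert_of_notMem (by simp), hcardu] at e1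
    omega
  -- I4 : class version
  have hI4 : ∀ x : ZMod q, (Finset.univ.filter fun m => W m = W x ∧ TT m < TT x).card
      + (Finset.univ.filter fun m => W m = W x ∧ TT x < TT m).card + 1
      = (Finset.univ.filter fun m => W m = W x).card := by
    intro x
    have e1 := Finset.card_filter_add_card_filter_not
      (s := Finset.univ.filter fun m => W m = W x) (p := fun m => TT m < TT x)
    have e2 : (Finset.univ.filter fun m => W m = W x).filter (fun m => TT m < TT x)
        = Finset.univ.filter fun m => W m = W x ∧ TT m < TT x := by
      rw [Finset.filter_filter]
    have e3 : (Finset.univ.filter fun m => W m = W x).filter (fun m => ¬ TT m < TT x)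
        = insert x (Finset.univ.filter fun m => W m = W x ∧ TT x < TT m) := by
      ext m
      simp only [Finset.mem_filter, Finset.mem_insert, Finset.mem_univ, true_and, not_lt]
      constructor
      · rintro ⟨h1, h2⟩
        rcases eq_or_lt_of_le h2 with h | h
        · exact Or.inl (hTinj m x h.symm)
        · exact Or.inr ⟨h1, h⟩
      · rintro (rfl | ⟨h1, h2⟩)
        · exact ⟨rfl, le_refl _⟩
        · exact ⟨h1, h2.le⟩
    rw [e2, e3, Finset.card_insert_of_notMem (by simp)] at e1
    omega
  -- star identity
  have hstar : ∀ x : ZMod q, (Finset.univ.filter fun k => TT (x + 1) < TT k).card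
      = (Finset.univ.filter fun m => W m < W x).card
        + (Finset.univ.filter fun m => W m = W x ∧ TT x < TT m).card := by
    intro x
    have hbij : Finset.univ.filter (fun k => TT (x + 1) < TT k)
        = ((Finset.univ.filter fun m => W m < W x)
            ∪ (Finset.univ.filter fun m => W m = W x ∧ TT x < TT m)).image (· + 1) := by
      ext k
      simp only [Finset.mem_filter, Finset.mem_image, Finset.mem_union, Finset.mem_univ,
        true_and]
      constructor
      · intro hk
        refine ⟨k - 1, ?_, by ring⟩
        have hk1 : (k - 1) + 1 = k := by ring
        rcases lt_trichotomy (W (k - 1)) (W x) with h | h | h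
        · exact Or.inl h
        · refine Or.inr ⟨h, ?_⟩
          have h2 := (hL3 x (k - 1) h.symm).2
          rw [hk1] at h2
          exact h2 hk
        · exfalso
          have h2 := hL2 x (k - 1) h
          rw [hk1] at h2
          linarith
      · rintro ⟨m, (h | ⟨h1, h2⟩), rfl⟩
        · exact hL2 m x h
        · exact (hL3 x m h1.symm).1 h2
    rw [hbij, Finset.card_image_of_injective _ (add_left_injective 1),
      Finset.card_union_of_disjoint]
    rw [Finset.disjoint_filter]
    intro m _ h1 h2
    exact absurd h2.1 (ne_of_lt h1)
  -- monotonicity and injectivity of ranks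
  have hfmono : ∀ x y : ZMod q, TT x < TT y →
      (Finset.univ.filter fun m => TT m < TT x).card
        < (Finset.univ.filter fun m => TT m < TT y).card := by
    intro x y h
    apply Finset.card_lt_card
    rw [Finset.ssubset_iff_of_subset (by
      intro m hm
      simp only [Finset.mem_filter, Finset.mem_univ, true_and] at hm ⊢
      linarith)]
    refine ⟨x, ?_, ?_⟩
    · simp only [Finset.mem_filter, Finset.mem_univ, true_and]; exact h
    · simp
  have hfinj : ∀ x y : ZMod q,
      (Finset.univ.filter fun m => TT m < TT x).card
        = (Finset.univ.filter fun m => TT m < TT y).card → x = y := by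
    intro x y h
    by_contra hne
    have hTTne : TT x ≠ TT y := fun h' => hne (hTinj x y h')
    rcases lt_or_gt_of_ne hTTne with h' | h'
    · have := hfmono x y h'; omega
    · have := hfmono y x h'; omega
  have hfcmono : ∀ x y : ZMod q, W y = W x → TT x < TT y →
      (Finset.univ.filter fun m => W m = W x ∧ TT m < TT x).card
        < (Finset.univ.filter fun m => W m = W y ∧ TT m < TT y).card := by
    intro x y hW h
    apply Finset.card_lt_card
    rw [Finset.ssubset_iff_of_subset (by
      intro m hm
      simp only [Finset.mem_filter, Finset.mem_univ, true_and] at hm ⊢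
      exact ⟨hm.1.trans hW.symm, by linarith [hm.2]⟩)]
    refine ⟨x, ?_, ?_⟩
    · simp only [Finset.mem_filter, Finset.mem_univ, true_and]
      exact ⟨hW.symm, h⟩
    · simp
  -- class-label congruence helper
  have hWcongr : ∀ (u v : ZMod q), W u = W v → ∀ p : ZMod q → Prop,
      (Finset.univ.filter fun m => W m = W u ∧ p m)
        = (Finset.univ.filter fun m => W m = W v ∧ p m) := by
    intro u v h p
    apply Finset.filter_congr
    intro m _
    rw [h]
  have hNltcongr : ∀ (u v : ZMod q), W u = W v →
      (Finset.univ.filter fun m => W m < W u) = (Finset.univ.filter fun m => W m < W v) := by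
    intro u v h
    apply Finset.filter_congr
    intro m _
    rw [h]
  have hfcinj : ∀ x y : ZMod q, W y = W x →
      (Finset.univ.filter fun m => W m = W x ∧ TT m < TT x).card
        = (Finset.univ.filter fun m => W m = W x ∧ TT m < TT y).card → x = y := by
    intro x y hW h
    by_contra hne
    have hTTne : TT x ≠ TT y := fun h' => hne (hTinj x y h')
    rcases lt_or_gt_of_ne hTTne with h' | h'
    · have h2 := hfcmono x y hW h'
      rw [hWcongr y x hW (fun m => TT m < TT y)] at h2
      omega
    · have h2 := hfcmono y x hW.symm h'
      rw [hWcongr y x hW (fun m => TT m < TT y)] at h2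
      omega
  -- existence of the global mirror
  have hRex : ∀ n, n < q → ∃ y : ZMod q,
      (Finset.univ.filter fun m => TT m < TT y).card = n := by
    have himg : Finset.univ.image
          (fun y : ZMod q => (Finset.univ.filter fun m => TT m < TT y).card)
        = Finset.range q := by
      apply Finset.eq_of_subset_of_card_le
      · intro n hn
        simp only [Finset.mem_image] at hn
        obtain ⟨y, -, rfl⟩ := hn
        rw [Finset.mem_range]
        have := hI3 y
        omega
      · rw [Finset.card_range,
          Finset.card_image_of_injective _ (fun x y h => hfinj x y h), hcardu]
    intro n hn
    have : n ∈ Finset.range q := Finset.mem_range.2 hn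
    rw [← himg] at this
    simp only [Finset.mem_image] at this
    obtain ⟨y, -, hy⟩ := this
    exact ⟨y, hy⟩
  -- existence of the class mirror
  have hTex : ∀ x : ZMod q, ∃ y, W y = W x ∧
      (Finset.univ.filter fun m => W m = W x ∧ TT m < TT y).card
        = (Finset.univ.filter fun m => W m = W x ∧ TT x < TT m).card := by
    intro x
    set C := Finset.univ.filter (fun m : ZMod q => W m = W x) with hC
    have hxC : x ∈ C := by simp [hC]
    have hinjC : Set.InjOn
        (fun y : ZMod q => (Finset.univ.filter fun m => W m = W x ∧ TT m < TT y).card) C := by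
      intro u hu v hv h
      simp only [hC, Finset.coe_filter, Set.mem_setOf_eq, Finset.mem_univ, true_and] at hu hv
      have h1 : (Finset.univ.filter fun m => W m = W u ∧ TT m < TT u).card
          = (Finset.univ.filter fun m => W m = W u ∧ TT m < TT v).card := by
        rw [hWcongr u x hu (fun m => TT m < TT u),
          hWcongr u x hu (fun m => TT m < TT v)]
        exact h
      exact hfcinj u v (hv.trans hu.symm) h1
    have hboundC : ∀ y ∈ C,
        (Finset.univ.filter fun m => W m = W x ∧ TT m < TT y).card < C.card := by
      intro y hy
      simp only [hC, Finset.mem_filter, Finset.mem_univ, true_and] at hy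
      have h4 := hI4 y
      rw [hWcongr y x hy (fun m => TT m < TT y),
        hWcongr y x hy (fun m => TT y < TT m)] at h4
      have hCeq : (Finset.univ.filter fun m => W m = W y).card = C.card := by
        rw [hC]
        congr 1
        apply Finset.filter_congr
        intro m _
        rw [hy]
      omega
    have himg : C.image
          (fun y : ZMod q => (Finset.univ.filter fun m => W m = W x ∧ TT m < TT y).card)
        = Finset.range C.card := by
      apply Finset.eq_of_subset_of_card_le
      · intro n hn
        simp only [Finset.mem_image] at hn
        obtain ⟨y, hy, rfl⟩ := hn
        exact Finset.mem_range.2 (hboundC y hy)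
      · rw [Finset.card_range, Finset.card_image_of_injOn hinjC]
    have hgcmem : (Finset.univ.filter fun m => W m = W x ∧ TT x < TT m).card
        ∈ Finset.range C.card := by
      rw [Finset.mem_range]
      have := hI4 x
      rw [hC]
      omega
    rw [← himg] at hgcmem
    simp only [Finset.mem_image] at hgcmem
    obtain ⟨y, hyC, hy⟩ := hgcmem
    simp only [hC, Finset.mem_filter, Finset.mem_univ, true_and] at hyC
    exact ⟨y, hyC, hy⟩
  -- choose the mirrors
  choose Rh hRh using fun x : ZMod q => hRex
    (q - 1 - (Finset.univ.filter fun m => TT m < TT x).card) (by have := hI3 x; omega)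
  choose Th hTh1 hTh2 using hTex
  -- the fundamental identity : Rh (Th x) = x + 1
  have hmain : ∀ x : ZMod q, Rh (Th x) = x + 1 := by
    intro x
    apply hfinj
    rw [hRh (Th x)]
    have h1 : (Finset.univ.filter fun m => TT m < TT (Th x)).card
        = (Finset.univ.filter fun m => W m < W x).card
          + (Finset.univ.filter fun m => W m = W x ∧ TT x < TT m).card := by
      rw [hI1 (Th x), hNltcongr (Th x) x (hTh1 x),
        hWcongr (Th x) x (hTh1 x) (fun m => TT m < TT (Th x)), hTh2 x]
    rw [h1, ← hstar x]
    have h2 := hI3 (x + 1)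
    omega
  have hRR : ∀ x : ZMod q, Rh (Rh x) = x := by
    intro x
    apply hfinj
    rw [hRh (Rh x), hRh x]
    have := hI3 x
    omega
  have hTT2 : ∀ x : ZMod q, Th (Th x) = x := by
    intro x
    have hW2 : W (Th (Th x)) = W x := (hTh1 (Th x)).trans (hTh1 x)
    apply (hfcinj x (Th (Th x)) hW2 ?_).symm
    have h2 := hTh2 (Th x)
    rw [hWcongr (Th x) x (hTh1 x) (fun m => TT m < TT (Th (Th x))),
      hWcongr (Th x) x (hTh1 x) (fun m => TT (Th x) < TT m)] at h2
    rw [h2]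
    -- goal : fc x = gc (Th x) (with class W x); use I4 at Th x and x
    have h4 := hI4 (Th x)
    rw [hWcongr (Th x) x (hTh1 x) (fun m => TT m < TT (Th x)),
      hWcongr (Th x) x (hTh1 x) (fun m => TT (Th x) < TT m)] at h4
    have h4' := hI4 x
    have hCeq : (Finset.univ.filter fun m => W m = W (Th x)).card
        = (Finset.univ.filter fun m => W m = W x).card := by
      congr 1
      apply Finset.filter_congr
      intro m _
      rw [hTh1 x]
    rw [hCeq] at h4
    rw [hTh2 x] at h4
    omega
  -- algebraic endgame
  have hTR : ∀ x : ZMod q, Th x = Rh (x + 1) := by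
    intro x
    have := congrArg Rh (hmain x)
    rwa [hRR (Th x)] at this
  have hRstep : ∀ y : ZMod q, Rh (y + 1) = Rh y - 1 := by
    intro y
    have h1 : y = Rh (Rh (y + 1) + 1) := by
      conv_lhs => rw [← hTT2 y]
      rw [hTR y, hTR (Rh (y + 1))]
    have h2 := congrArg Rh h1
    rw [hRR (Rh (y + 1) + 1)] at h2
    have : Rh (y + 1) + 1 - 1 = Rh y - 1 := by rw [← h2]
    simpa using this
  have hRlin : ∀ n : ℕ, Rh (n : ZMod q) = Rh 0 - n := by
    intro n
    induction n with
    | zero => simp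
    | succ m ih =>
      push_cast
      rw [hRstep (m : ZMod q), ih]
      push_cast
      ring
  refine ⟨Rh 0 - 1, fun x => ?_⟩
  have hx : ((x.val : ℕ) : ZMod q) = x := ZMod.natCast_rightInverse x
  have h1 : Th x = Rh 0 - 1 - x := by
    rw [hTR x, ← hx]
    push_cast
    rw [show ((x.val : ZMod q) + 1) = ((x.val + 1 : ℕ) : ZMod q) by push_cast; ring,
      hRlin (x.val + 1)]
    push_cast
    ring
  rw [← h1]
  exact hTh1 x

/-- Every periodic interval of a symmetric IEM is symmetric: its reflection belongs to
its orbit (up to a finite set of points). -/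
theorem symmIEM_periodic_interval_is_symmetric
    {d : ℕ} (lam : Fin d → ℝ) (F : ℝ → ℝ) (hF : IsSymmIEM lam F)
    (q : ℕ) (a b : ℝ) (hJ : IsPeriodicInterval lam F q a b) :
    ∃ k < q, EqUpToFinite (circRefl '' Set.Ico a b) (F^[k] '' Set.Ico a b) := by
  obtain ⟨ha0, hab, hb1, hq, ⟨hFq, hInE⟩, hmin, hmax⟩ := hJ
  have hd : 0 < d := by
    by_contra hd
    have hd0 : d = 0 := by omega
    have := hF.sum_one
    subst hd0
    simp at this
  have hInE' : ∀ k : ℕ, ∃ i : Fin d,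
      k < q → F^[k] '' Set.Ico a b ⊆ Set.Ico (beta lam i.val) (beta lam (i.val + 1)) := by
    intro k
    by_cases h : k < q
    · obtain ⟨i, hi⟩ := hInE k h
      exact ⟨i, fun _ => hi⟩
    · exact ⟨⟨0, hd⟩, fun h' => absurd h' h⟩
  choose idx hidx using hInE'
  set c : Fin d → ℝ := fun i => 1 - beta lam (i.val + 1) - beta lam i.val with hc
  set t : ℕ → ℝ := fun k => ∑ j ∈ Finset.range k, c (idx j) with ht
  have ht0 : t 0 = 0 := by simp [ht]
  have htsucc : ∀ n, t (n + 1) = t n + c (idx n) := fun n =>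
    Finset.sum_range_succ (fun j => c (idx j)) n
  -- orbit intervals
  have horb : ∀ k, k ≤ q → F^[k] '' Set.Ico a b = Set.Ico (a + t k) (b + t k) := by
    intro k
    induction k with
    | zero => intro _; simp [ht0]
    | succ n ih =>
      intro hk
      have hn : n < q := by omega
      have h1 : F^[n] '' Set.Ico a b = Set.Ico (a + t n) (b + t n) := ih (by omega)
      have h2 : Set.Ico (a + t n) (b + t n)
          ⊆ Set.Ico (beta lam (idx n).val) (beta lam ((idx n).val + 1)) := h1 ▸ hidx n hn
      calc F^[n + 1] '' Set.Ico a b = F '' (F^[n] '' Set.Ico a b) := by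
            rw [Function.iterate_succ', Set.image_comp]
        _ = F '' Set.Ico (a + t n) (b + t n) := by rw [h1]
        _ = Set.Ico (a + t n + c (idx n)) (b + t n + c (idx n)) :=
            image_Ico_of_subset hF (idx n) _ _ h2
        _ = Set.Ico (a + t (n + 1)) (b + t (n + 1)) := by
            rw [htsucc n]; congr 1 <;> ring
  have htq : t q = 0 := by
    have h1 : Set.Ico (a + t q) (b + t q) = Set.Ico a b := by
      rw [← horb q le_rfl]; exact hFq
    have h2 := (Set.Ico_eq_Ico_iff (Or.inl (by linarith))).1 h1
    linarith [h2.1]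
  have hlo : ∀ k, k < q →
      beta lam (idx k).val ≤ a + t k ∧ b + t k ≤ beta lam ((idx k).val + 1) := by
    intro k hk
    have := horb k hk.le ▸ hidx k hk
    exact (Set.Ico_subset_Ico_iff (by linarith)).1 this
  -- the mirror orbit
  set M : ℕ → Set ℝ := fun k => Set.Ico (1 - b - t k) (1 - a - t k) with hM
  have hMstep : ∀ k, k < q →
      (M (k + 1) ⊆ Set.Ico (beta lam (idx k).val) (beta lam ((idx k).val + 1)))
        ∧ F '' M (k + 1) = M k := by
    intro k hk
    obtain ⟨hl, hr⟩ := hlo k hk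
    have hcv : c (idx k) = 1 - beta lam ((idx k).val + 1) - beta lam (idx k).val := rfl
    have hsub : M (k + 1) ⊆ Set.Ico (beta lam (idx k).val) (beta lam ((idx k).val + 1)) := by
      intro x hx
      simp only [hM, Set.mem_Ico] at hx ⊢
      rw [htsucc k, hcv] at hx
      constructor <;> [linarith [hx.1]; linarith [hx.2]]
    refine ⟨hsub, ?_⟩
    rw [image_Ico_of_subset hF (idx k) _ _ hsub]
    simp only [hM]
    rw [htsucc k, hcv]
    congr 1 <;> ring
  have hMdown : ∀ n, n ≤ q → ∀ j, j ≤ n → F^[j] '' M n = M (n - j) := by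
    intro n hn j
    induction j with
    | zero => intro _; simp
    | succ m ih =>
      intro hm
      have h1 : F^[m + 1] '' M n = F '' (F^[m] '' M n) := by
        rw [Function.iterate_succ', Set.image_comp]
      rw [h1, ih (by omega)]
      have hnm : n - m = (n - (m + 1)) + 1 := by omega
      have hlt : n - (m + 1) < q := by omega
      rw [hnm]
      exact (hMstep _ hlt).2
  have hM0q : M 0 = M q := by simp [hM, ht0, htq]
  -- orbit formula with wrap-around
  have horb2 : ∀ r j, r < q → j < q →
      F^[j] '' Set.Ico (a + t r) (b + t r)
        = Set.Ico (a + t ((j + r) % q)) (b + t ((j + r) % q)) := by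
    intro r j hr hj
    have h1 : F^[j] '' Set.Ico (a + t r) (b + t r) = F^[j + r] '' Set.Ico a b := by
      rw [← horb r hr.le, ← Set.image_comp, ← Function.iterate_add]
    rcases lt_or_ge (j + r) q with h | h
    · rw [h1, horb (j + r) h.le, Nat.mod_eq_of_lt h]
    · have h3 : (j + r) % q = j + r - q := by
        rw [Nat.mod_eq_sub_mod h, Nat.mod_eq_of_lt (by omega)]
      have h4 : F^[j + r] '' Set.Ico a b
          = Set.Ico (a + t (j + r - q)) (b + t (j + r - q)) := by
        calc F^[j + r] '' Set.Ico a b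
            = F^[(j + r - q) + q] '' Set.Ico a b := by
              rw [show (j + r - q) + q = j + r from by omega]
          _ = F^[j + r - q] '' (F^[q] '' Set.Ico a b) := by
              rw [Function.iterate_add, Set.image_comp]
          _ = Set.Ico (a + t (j + r - q)) (b + t (j + r - q)) := by
              rw [hFq, horb (j + r - q) (by omega)]
      rw [h1, h3, h4]
  have hFqJr : ∀ r, r < q → F^[q] '' Set.Ico (a + t r) (b + t r)
      = Set.Ico (a + t r) (b + t r) := by
    intro r hr
    rw [← horb r hr.le, ← Set.image_comp, ← Function.iterate_add, add_comm,
      Function.iterate_add, Set.image_comp, hFq, horb r hr.le]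
  -- Step A : the orbit intervals of J are pairwise disjoint
  have hJJdisj : ∀ r, 0 < r → r < q →
      ¬ (Set.Ico a b ∩ Set.Ico (a + t r) (b + t r)).Nonempty := by
    rintro r hr0 hrq ⟨z, hz1, hz2⟩
    have hu1 : a < b + t r := lt_of_le_of_lt hz1.1 hz2.2
    have hu2 : a + t r < b := lt_of_le_of_lt hz2.1 hz1.2
    have hunion : Set.Ico a b ∪ Set.Ico (a + t r) (b + t r)
        = Set.Ico (min a (a + t r)) (max b (b + t r)) :=
      Set.Ico_union_Ico' hu2.le hu1.le
    have hPer : PerAux lam F q (Set.Ico (min a (a + t r)) (max b (b + t r))) := by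
      constructor
      · rw [← hunion, Set.image_union, hFq, hFqJr r hrq]
      · intro j hj
        have hs : (j + r) % q < q := Nat.mod_lt _ hq
        have hAj : F^[j] '' Set.Ico a b = Set.Ico (a + t j) (b + t j) := horb j hj.le
        have hBj := horb2 r j hrq hj
        have hEj : Set.Ico (a + t j) (b + t j)
            ⊆ Set.Ico (beta lam (idx j).val) (beta lam ((idx j).val + 1)) := by
          rw [← hAj]; exact hidx j hj
        have hEs : Set.Ico (a + t ((j + r) % q)) (b + t ((j + r) % q))
            ⊆ Set.Ico (beta lam (idx ((j + r) % q)).val)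
              (beta lam ((idx ((j + r) % q)).val + 1)) := by
          rw [← horb _ hs.le]; exact hidx _ hs
        have hz1' : F^[j] z ∈ Set.Ico (a + t j) (b + t j) := by
          rw [← hAj]; exact ⟨z, hz1, rfl⟩
        have hz2' : F^[j] z ∈ Set.Ico (a + t ((j + r) % q)) (b + t ((j + r) % q)) := by
          rw [← hBj]; exact ⟨z, hz2, rfl⟩
        have hii : idx j = idx ((j + r) % q) :=
          elem_eq hF.pos (hEj hz1') (hEs hz2')
        refine ⟨idx j, ?_⟩
        rw [← hunion, Set.image_union, hAj, hBj]
        apply Set.union_subset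
        · exact hEj
        · rw [hii]; exact hEs
    have heq : Set.Ico (min a (a + t r)) (max b (b + t r)) = Set.Ico a b :=
      hmax _ _ (by rw [← hunion]; exact Set.subset_union_left) hPer
    have hsub2 : Set.Ico (a + t r) (b + t r) ⊆ Set.Ico a b := by
      rw [← heq, ← hunion]; exact Set.subset_union_right
    obtain ⟨h1, h2⟩ := (Set.Ico_subset_Ico_iff (by linarith)).1 hsub2
    have htr0 : t r = 0 := by linarith
    have hPr : PerAux lam F r (Set.Ico a b) := by
      constructor
      · rw [horb r hrq.le, htr0]; simp
      · intro k hk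
        exact ⟨idx k, hidx k (hk.trans hrq)⟩
    exact absurd (hmin r hr0 hPr) (by omega)
  -- the key fact: the mirrored interval meets the orbit (hard part)
  have hkey : ∃ k, k < q ∧
      (Set.Ico (1 - b) (1 - a) ∩ Set.Ico (a + t k) (b + t k)).Nonempty := by
    classical
    haveI : NeZero q := ⟨hq.ne'⟩
    set W : ZMod q → Fin d := fun x => idx x.val with hWdef
    set TT : ZMod q → ℝ := fun x => t x.val with hTTdef
    have hvlt : ∀ x : ZMod q, x.val < q := fun x => ZMod.val_lt x
    have htmod : ∀ m, m ≤ q → t (m % q) = t m := by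
      intro m hm
      rcases eq_or_lt_of_le hm with h | h
      · subst h; rw [Nat.mod_self, ht0, htq]
      · rw [Nat.mod_eq_of_lt h]
    have hvadd : ∀ x : ZMod q, (x + 1).val = (x.val + 1) % q := by
      intro x
      rw [ZMod.val_add, ZMod.val_one_eq_one_mod]
      exact Nat.ModEq.add_left x.val (Nat.mod_modEq 1 q)
    have hTTsucc : ∀ x : ZMod q, TT (x + 1) = t (x.val + 1) := by
      intro x
      show t ((x + 1).val) = t (x.val + 1)
      rw [hvadd x, htmod _ (by have := hvlt x; omega)]
    have hTstep : ∀ x : ZMod q, TT (x + 1) = TT x + c (W x) := by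
      intro x; rw [hTTsucc x]; exact htsucc x.val
    have hL1 : ∀ x y : ZMod q, W x < W y → TT x < TT y := by
      intro x y hxy
      have h1 : b + TT x ≤ beta lam ((W x).val + 1) := (hlo x.val (hvlt x)).2
      have h2 : beta lam (W y).val ≤ a + TT y := (hlo y.val (hvlt y)).1
      have h3 : beta lam ((W x).val + 1) ≤ beta lam (W y).val :=
        beta_mono hF.pos (Nat.succ_le_of_lt hxy)
      linarith
    have hL2 : ∀ x y : ZMod q, W x < W y → TT (y + 1) < TT (x + 1) := by
      intro x y hxy
      have h1 : beta lam (W x).val ≤ a + TT x := (hlo x.val (hvlt x)).1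
      have h2 : b + TT y ≤ beta lam ((W y).val + 1) := (hlo y.val (hvlt y)).2
      have h3 : beta lam ((W x).val + 1) ≤ beta lam (W y).val :=
        beta_mono hF.pos (Nat.succ_le_of_lt hxy)
      rw [hTstep x, hTstep y]
      have hcx : c (W x) = 1 - beta lam ((W x).val + 1) - beta lam (W x).val := rfl
      have hcy : c (W y) = 1 - beta lam ((W y).val + 1) - beta lam (W y).val := rfl
      rw [hcx, hcy]
      linarith
    have hL3 : ∀ x y : ZMod q, W x = W y → (TT x < TT y ↔ TT (x + 1) < TT (y + 1)) := by
      intro x y hxy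
      rw [hTstep x, hTstep y, hxy]
      constructor <;> intro <;> linarith
    have hTinj : ∀ x y : ZMod q, TT x = TT y → x = y := by
      intro x y hxy
      by_contra hne
      have hkey2 : ∀ u v : ℕ, u < v → v < q → t u = t v → False := by
        intro u v huv hv htuv
        refine hJJdisj (v - u) (by omega) (by omega) ⟨F^[q - u] (a + t u), ?_, ?_⟩
        · have himg : F^[q - u] '' (F^[u] '' Set.Ico a b) = Set.Ico a b := by
            rw [← Set.image_comp, ← Function.iterate_add,
              show q - u + u = q from by omega, hFq]
          have hmem : (a + t u) ∈ F^[u] '' Set.Ico a b := by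
            rw [horb u (by omega)]
            exact ⟨le_refl _, by linarith⟩
          rw [← himg]; exact ⟨_, hmem, rfl⟩
        · have himg : F^[q - u] '' (F^[v] '' Set.Ico a b)
              = Set.Ico (a + t (v - u)) (b + t (v - u)) := by
            rw [← Set.image_comp, ← Function.iterate_add]
            calc F^[q - u + v] '' Set.Ico a b
                = F^[(v - u) + q] '' Set.Ico a b := by
                  rw [show (v - u) + q = q - u + v from by omega]
              _ = F^[v - u] '' (F^[q] '' Set.Ico a b) := by
                  rw [Function.iterate_add, Set.image_comp]
              _ = Set.Ico (a + t (v - u)) (b + t (v - u)) := by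
                  rw [hFq, horb (v - u) (by omega)]
          have hmem : (a + t u) ∈ F^[v] '' Set.Ico a b := by
            rw [horb v hv.le, ← htuv]
            exact ⟨le_refl _, by linarith⟩
          rw [← himg]; exact ⟨_, hmem, rfl⟩
      have hvne : x.val ≠ y.val := fun h => hne (ZMod.val_injective q h)
      rcases Nat.lt_or_ge x.val y.val with h | h
      · exact hkey2 x.val y.val h (hvlt y) hxy
      · exact hkey2 y.val x.val (by omega) (hvlt x) hxy.symm
    obtain ⟨cc, hcc⟩ := reversible_of_antitone W TT hL1 hL2 hL3 hTinj
    -- basic subset facts in ZMod form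
    have hJsub : ∀ x : ZMod q, Set.Ico (a + TT x) (b + TT x)
        ⊆ Set.Ico (beta lam (W x).val) (beta lam ((W x).val + 1)) := by
      intro x
      have h1 := hidx x.val (hvlt x)
      rwa [horb x.val (hvlt x).le] at h1
    have hMsubZ : ∀ x : ZMod q, Set.Ico (1 - b - TT x) (1 - a - TT x)
        ⊆ Set.Ico (beta lam (W (x - 1)).val) (beta lam ((W (x - 1)).val + 1)) := by
      intro x
      have h1 := (hMstep (x - 1).val (hvlt (x - 1))).1
      simp only [hM] at h1
      have h2 : t ((x - 1).val + 1) = TT x := by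
        rw [← hTTsucc (x - 1), show (x - 1) + 1 = x from by ring]
      rwa [h2] at h1
    have hMstepZ : ∀ x : ZMod q,
        F '' Set.Ico (1 - b - TT (x + 1)) (1 - a - TT (x + 1))
          = Set.Ico (1 - b - TT x) (1 - a - TT x) := by
      intro x
      have h2 := (hMstep x.val (hvlt x)).2
      simp only [hM] at h2
      rw [← hTTsucc x] at h2
      exact h2
    -- the rigid hull orbit
    set A : ZMod q → ℝ := fun x => min (a + TT x) (1 - b - TT (cc + 1 - x)) with hA
    set B : ZMod q → ℝ := fun x => max (b + TT x) (1 - a - TT (cc + 1 - x)) with hB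
    have hWM : ∀ x : ZMod q, W (cc + 1 - x - 1) = W x := by
      intro x
      rw [show cc + 1 - x - 1 = cc - x from by ring]
      exact hcc x
    have hHsub : ∀ x : ZMod q, Set.Ico (A x) (B x)
        ⊆ Set.Ico (beta lam (W x).val) (beta lam ((W x).val + 1)) := by
      intro x
      have h1 := (Set.Ico_subset_Ico_iff (by linarith)).1 (hJsub x)
      have h2 := (Set.Ico_subset_Ico_iff (by linarith)).1 (hMsubZ (cc + 1 - x))
      rw [hWM x] at h2
      apply Set.Ico_subset_Ico
      · exact le_min h1.1 h2.1
      · exact max_le h1.2 h2.2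
    have hHstep : ∀ x : ZMod q,
        F '' Set.Ico (A x) (B x) = Set.Ico (A (x + 1)) (B (x + 1)) := by
      intro x
      rw [image_Ico_of_subset hF (W x) _ _ (hHsub x)]
      have hTM : 1 - b - TT (cc + 1 - x)
          + (1 - beta lam ((W x).val + 1) - beta lam (W x).val)
          = 1 - b - TT (cc + 1 - (x + 1)) := by
        have h1 : TT ((cc - x) + 1) = TT (cc - x) + c (W (cc - x)) := hTstep (cc - x)
        rw [hcc x] at h1
        have h2 : c (W x) = 1 - beta lam ((W x).val + 1) - beta lam (W x).val := rfl
        rw [show cc + 1 - (x + 1) = cc - x from by ring,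
          show cc + 1 - x = (cc - x) + 1 from by ring, h1, h2]
        ring
      have hTM' : 1 - a - TT (cc + 1 - x)
          + (1 - beta lam ((W x).val + 1) - beta lam (W x).val)
          = 1 - a - TT (cc + 1 - (x + 1)) := by
        have h1 : TT ((cc - x) + 1) = TT (cc - x) + c (W (cc - x)) := hTstep (cc - x)
        rw [hcc x] at h1
        have h2 : c (W x) = 1 - beta lam ((W x).val + 1) - beta lam (W x).val := rfl
        rw [show cc + 1 - (x + 1) = cc - x from by ring,
          show cc + 1 - x = (cc - x) + 1 from by ring, h1, h2]
        ring
      have hTJ : a + TT x + (1 - beta lam ((W x).val + 1) - beta lam (W x).val)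
          = a + TT (x + 1) := by
        have h1 : TT (x + 1) = TT x + c (W x) := hTstep x
        have h2 : c (W x) = 1 - beta lam ((W x).val + 1) - beta lam (W x).val := rfl
        rw [h1, h2]; ring
      have hTJ' : b + TT x + (1 - beta lam ((W x).val + 1) - beta lam (W x).val)
          = b + TT (x + 1) := by
        have h1 : TT (x + 1) = TT x + c (W x) := hTstep x
        have h2 : c (W x) = 1 - beta lam ((W x).val + 1) - beta lam (W x).val := rfl
        rw [h1, h2]; ring
      have eA : A x + (1 - beta lam ((W x).val + 1) - beta lam (W x).val) = A (x + 1) := by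
        simp only [hA]
        rw [← min_add_add_right, hTJ, hTM]
      have eB : B x + (1 - beta lam ((W x).val + 1) - beta lam (W x).val) = B (x + 1) := by
        simp only [hB]
        rw [← max_add_add_right, hTJ', hTM']
      rw [eA, eB]
    have hHchain : ∀ n : ℕ, F^[n] '' Set.Ico (A 0) (B 0)
        = Set.Ico (A (n : ZMod q)) (B (n : ZMod q)) := by
      intro n
      induction n with
      | zero => simp
      | succ m ih =>
        rw [Function.iterate_succ', Set.image_comp, ih, hHstep]
        push_cast
        rfl
    have hTT0 : TT 0 = 0 := by
      show t (0 : ZMod q).val = 0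
      rw [ZMod.val_zero, ht0]
    have hJH : Set.Ico a b ⊆ Set.Ico (A 0) (B 0) := by
      apply Set.Ico_subset_Ico
      · simp only [hA, hTT0]
        simp
      · simp only [hB, hTT0]
        simp
    have hHPer : PerAux lam F q (Set.Ico (A 0) (B 0)) := by
      constructor
      · rw [hHchain q, ZMod.natCast_self]
      · intro k hk
        rw [hHchain k]
        exact ⟨W (k : ZMod q), hHsub (k : ZMod q)⟩
    have hHeq : Set.Ico (A 0) (B 0) = Set.Ico a b := hmax _ _ hJH hHPer
    -- the mirrored interval M (cc.val + 1) is inside J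
    have hMin : Set.Ico (1 - b - TT (cc + 1)) (1 - a - TT (cc + 1)) ⊆ Set.Ico a b := by
      rw [← hHeq]
      apply Set.Ico_subset_Ico
      · simp only [hA]
        rw [show cc + 1 - 0 = cc + 1 from by ring]
        exact min_le_right _ _
      · simp only [hB]
        rw [show cc + 1 - 0 = cc + 1 from by ring]
        exact le_max_right _ _
    -- produce the intersection point
    set n : ℕ := cc.val + 1 with hn
    have hnq : n ≤ q := by have := hvlt cc; omega
    have hTTn : TT (cc + 1) = t n := by rw [hn]; exact hTTsucc cc
    have hzmem : (1 - b - t n) ∈ Set.Ico a b := by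
      apply hMin
      rw [hTTn]
      exact ⟨le_refl _, by linarith⟩
    have h1 : F^[n] '' M n = M 0 := by
      have := hMdown n hnq n le_rfl
      rwa [Nat.sub_self] at this
    have h2 : F^[n] '' Set.Ico a b = Set.Ico (a + t n) (b + t n) := horb n hnq
    have hzn : (1 - b - t n) ∈ M n := by
      simp only [hM]
      exact ⟨le_refl _, by linarith⟩
    have hw1 : F^[n] (1 - b - t n) ∈ M 0 := by rw [← h1]; exact ⟨_, hzn, rfl⟩
    have hw2 : F^[n] (1 - b - t n) ∈ Set.Ico (a + t n) (b + t n) := by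
      rw [← h2]; exact ⟨_, hzmem, rfl⟩
    have hM0' : M 0 = Set.Ico (1 - b) (1 - a) := by simp [hM, ht0]
    rcases Nat.lt_or_ge n q with hlt | hge
    · exact ⟨n, hlt, ⟨F^[n] (1 - b - t n), hM0' ▸ hw1, hw2⟩⟩
    · have hnq' : n = q := le_antisymm hnq hge
      refine ⟨0, hq, ⟨F^[n] (1 - b - t n), hM0' ▸ hw1, ?_⟩⟩
      have heq0 : Set.Ico (a + t 0) (b + t 0) = Set.Ico (a + t n) (b + t n) := by
        rw [ht0, hnq', htq]
      rw [heq0]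
      exact hw2
  obtain ⟨k, hkq, z, hz1, hz2⟩ := hkey
  have hM0eq : M 0 = Set.Ico (1 - b) (1 - a) := by simp [hM, ht0]
  -- push the intersection point forward by q - k steps
  set y := F^[q - k] z with hy
  have hyMk : y ∈ M k := by
    have hz1' : z ∈ M q := by rw [← hM0q, hM0eq]; exact hz1
    have h1 : F^[q - k] '' M q = M k := by
      have := hMdown q le_rfl (q - k) (by omega)
      rwa [show q - (q - k) = k by omega] at this
    rw [← h1]
    exact ⟨z, hz1', rfl⟩
  have hyJ : y ∈ Set.Ico a b := by
    have hz2' : z ∈ F^[k] '' Set.Ico a b := by rw [horb k hkq.le]; exact hz2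
    have h1 : F^[q - k] '' (F^[k] '' Set.Ico a b) = Set.Ico a b := by
      rw [← Set.image_comp, ← Function.iterate_add, Nat.sub_add_cancel hkq.le]
      exact hFq
    rw [← h1]
    exact ⟨z, hz2', rfl⟩
  set u := 1 - b - t k with hu
  set v := 1 - a - t k with hv
  have hMkuv : M k = Set.Ico u v := rfl
  have huv : u < v := by simp [hu, hv]; linarith
  rw [hMkuv] at hyMk
  have hub : u < b := lt_of_le_of_lt hyMk.1 hyJ.2
  have hav : a < v := lt_of_le_of_lt hyJ.1 hyMk.2
  -- the union is an interval with PerAux q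
  have hunion : Set.Ico a b ∪ Set.Ico u v = Set.Ico (min a u) (max b v) :=
    Set.Ico_union_Ico' hub.le hav.le
  -- q-th image of M k is M k
  have hMkq : F^[q] '' M k = M k := by
    have h1 : F^[k] '' M k = M 0 := by
      have := hMdown k hkq.le k le_rfl
      rwa [Nat.sub_self] at this
    have h2 : F^[q - k] '' M q = M k := by
      have := hMdown q le_rfl (q - k) (by omega)
      rwa [show q - (q - k) = k by omega] at this
    calc F^[q] '' M k = F^[q - k] '' (F^[k] '' M k) := by
          rw [← Set.image_comp, ← Function.iterate_add, Nat.sub_add_cancel hkq.le]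
      _ = F^[q - k] '' M q := by rw [h1, hM0q]
      _ = M k := h2
  have hPer : PerAux lam F q (Set.Ico (min a u) (max b v)) := by
    have hMkq' : F^[q] '' Set.Ico u v = Set.Ico u v := by rw [← hMkuv]; exact hMkq
    constructor
    · rw [← hunion, Set.image_union, hFq, hMkq']
    · intro j hj
      -- image of the J part
      have hAj : F^[j] '' Set.Ico a b = Set.Ico (a + t j) (b + t j) := horb j hj.le
      -- image of the M part is M n for a suitable 1 ≤ n ≤ q
      obtain ⟨n, hn1, hnq, hBj⟩ : ∃ n, 1 ≤ n ∧ n ≤ q ∧ F^[j] '' M k = M n := by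
        rcases Nat.lt_or_ge j k with hjk | hjk
        · exact ⟨k - j, by omega, by omega, hMdown k hkq.le j hjk.le⟩
        · refine ⟨q - (j - k), by omega, by omega, ?_⟩
          have h1 : F^[k] '' M k = M 0 := by
            have := hMdown k hkq.le k le_rfl
            rwa [Nat.sub_self] at this
          calc F^[j] '' M k = F^[j - k] '' (F^[k] '' M k) := by
                rw [← Set.image_comp, ← Function.iterate_add, Nat.sub_add_cancel hjk]
            _ = F^[j - k] '' M q := by rw [h1, hM0q]
            _ = M (q - (j - k)) := hMdown q le_rfl (j - k) (by omega)
      have hBsub : M n ⊆ Set.Ico (beta lam (idx (n - 1)).val) (beta lam ((idx (n - 1)).val + 1)) := by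
        have := (hMstep (n - 1) (by omega)).1
        rwa [show n - 1 + 1 = n by omega] at this
      -- the two parts intersect
      have hyMk' : y ∈ M k := by rw [hMkuv]; exact hyMk
      have hzz1 : (F^[j] y) ∈ F^[j] '' Set.Ico a b := ⟨y, hyJ, rfl⟩
      have hzz2 : (F^[j] y) ∈ M n := by rw [← hBj]; exact ⟨y, hyMk', rfl⟩
      have hii : idx j = idx (n - 1) :=
        elem_eq hF.pos (hidx j hj hzz1) (hBsub hzz2)
      refine ⟨idx j, ?_⟩
      rw [← hunion, Set.image_union]
      apply Set.union_subset
      · rw [hAj]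
        intro x hx
        exact hidx j hj (hAj ▸ hx)
      · rw [hMkuv] at hBj
        rw [hBj, hii]
        exact hBsub
  have hmaxapp : Set.Ico (min a u) (max b v) = Set.Ico a b :=
    hmax _ _ (by rw [← hunion]; exact Set.subset_union_left) hPer
  have hMkJ : Set.Ico u v ⊆ Set.Ico a b := by
    rw [← hmaxapp, ← hunion]
    exact Set.subset_union_right
  obtain ⟨hau, hvb⟩ := (Set.Ico_subset_Ico_iff huv).1 hMkJ
  rw [hu] at hau
  rw [hv] at hvb
  have hatk : a + t k = 1 - b := by linarith
  have hbtk : b + t k = 1 - a := by linarith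
  refine ⟨k, hkq, ?_⟩
  rw [horb k hkq.le, hatk, hbtk]
  -- final finiteness computation
  unfold EqUpToFinite
  have hfin : ({0, 1 - a, 1 - b} : Set ℝ).Finite := Set.toFinite _
  apply hfin.subset
  rintro w (⟨⟨x, hx, rfl⟩, hnot⟩ | ⟨hw, hnot⟩)
  · by_cases hx0 : x = 0
    · simp [circRefl, hx0]
    · have hcr : circRefl x = 1 - x := if_neg hx0
      have hxa : x = a := by
        by_contra hne
        apply hnot
        rw [hcr]
        constructor
        · linarith [hx.2]
        · have : a < x := lt_of_le_of_ne hx.1 (Ne.symm hne)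
          linarith
      rw [hcr, hxa]
      simp
  · have hwb : w = 1 - b := by
      by_contra hne
      apply hnot
      have h1 : 1 - b < w := lt_of_le_of_ne hw.1 (Ne.symm hne)
      have h1w : (1 : ℝ) - w ≠ 0 := by
        intro h0
        have hw1 : w = 1 := by linarith
        have := hw.2
        linarith
      refine ⟨1 - w, ⟨by linarith [hw.2], by linarith⟩, ?_⟩
      simp only [circRefl, if_neg h1w]
      ring
    rw [hwb]
    simp


end
end

section
/- Let P ⊆ ℝ be an open interval, ω : P → ℝ a C¹ function, f : ℝ × P → ℝ a C¹ function, ε ≠ 0, and define T(x,y) = (x + ω(y), y + ε f(x,y)) on ℝ × P. If T is area-preserving, i.e. det DT(x,y) = 1 + ε ∂f/∂y(x,y) − ω'(y) ε ∂f/∂x(x,y) = 1 for all (x,y) ∈ ℝ × P, then f is constant along the curves x + ω(y) = const: there exists a function g : ℝ → ℝ such that f(x,y) = g(x + ω(y)) for all (x,y) ∈ ℝ × P. Consequently the perturbation necessarily has the form f(x,y) = g(F_y(x)) where F_y(x) = x + ω(y). -/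
/-!
Since `det DT - 1 = ε (∂_y f - ω' ∂_x f)`, area preservation says exactly that `f` has zero
derivative along each curve `s ↦ (c - ω s, s)`, which parametrizes the level set `x + ω y = c`.
As `P` is an open interval, `f` is constant on each such curve, so `g c := f (c - ω y₀) y₀` works
for any fixed `y₀ ∈ P`.
-/

open Set

theorem DifferentiableAt.hasDerivAt_comp_prodMk {𝕜 E : Type*} [NontriviallyNormedField 𝕜]
    [NormedAddCommGroup E] [NormedSpace 𝕜 E] {F : 𝕜 → 𝕜 → E} {u v : 𝕜 → 𝕜} {u' v' t : 𝕜}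
    (hF : DifferentiableAt 𝕜 (Function.uncurry F) (u t, v t))
    (hu : HasDerivAt u u' t) (hv : HasDerivAt v v' t) :
    HasDerivAt (fun s => F (u s) (v s))
      (u' • deriv (F · (v t)) (u t) + v' • deriv (F (u t)) (v t)) t := by
  obtain ⟨L, hL⟩ := hF
  have hx : HasDerivAt (F · (v t)) (L (1, 0)) (u t) :=
    hL.comp_hasDerivAt_of_eq (u t) ((hasDerivAt_id (u t)).prodMk (hasDerivAt_const _ _)) rfl
  have hy : HasDerivAt (F (u t)) (L (0, 1)) (v t) :=
    hL.comp_hasDerivAt_of_eq (v t) ((hasDerivAt_const _ _).prodMk (hasDerivAt_id (v t))) rfl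
  rw [hx.deriv, hy.deriv, ← map_smul, ← map_smul, ← map_add]
  have hdir : u' • ((1 : 𝕜), (0 : 𝕜)) + v' • ((0 : 𝕜), (1 : 𝕜)) = (u', v') := by simp
  rw [hdir]
  exact hL.comp_hasDerivAt t (hu.prodMk hv)

theorem area_preserving_perturbation_form
    (P : Set ℝ) (hPopen : IsOpen P) (hPconn : P.OrdConnected)
    (ω : ℝ → ℝ) (hω : ContDiffOn ℝ 1 ω P)
    (f : ℝ → ℝ → ℝ)
    (hf : ContDiffOn ℝ 1 (fun p : ℝ × ℝ => f p.1 p.2) (Set.univ ×ˢ P))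
    (ε : ℝ) (hε : ε ≠ 0)
    (harea : ∀ x : ℝ, ∀ y ∈ P,
      1 + ε * deriv (fun y' => f x y') y
        - deriv ω y * (ε * deriv (fun x' => f x' y) x) = 1) :
    ∃ g : ℝ → ℝ, ∀ x : ℝ, ∀ y ∈ P, f x y = g (x + ω y) := by
  rcases P.eq_empty_or_nonempty with rfl | ⟨y₀, hy₀⟩
  · exact ⟨0, fun _ y hy => absurd hy (notMem_empty y)⟩
  have hfdiff (x : ℝ) {y : ℝ} (hy : y ∈ P) : DifferentiableAt ℝ (Function.uncurry f) (x, y) :=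
    (hf.differentiableOn one_ne_zero).differentiableAt
      ((isOpen_univ.prod hPopen).mem_nhds ⟨mem_univ x, hy⟩)
  have hωdiff {y : ℝ} (hy : y ∈ P) : HasDerivAt ω (deriv ω y) y :=
    ((hω.differentiableOn one_ne_zero).differentiableAt (hPopen.mem_nhds hy)).hasDerivAt
  have hlevel (c : ℝ) {t : ℝ} (ht : t ∈ P) : HasDerivAt (fun s => f (c - ω s) s) 0 t := by
    refine ((hfdiff (c - ω t) ht).hasDerivAt_comp_prodMk ((hωdiff ht).const_sub c)
      (hasDerivAt_id t)).congr_deriv (mul_left_cancel₀ hε ?_)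
    simp only [smul_eq_mul, id, one_mul]
    linear_combination harea (c - ω t) t ht
  refine ⟨fun c => f (c - ω y₀) y₀, fun x y hy => ?_⟩
  simpa using hPopen.is_const_of_deriv_eq_zero hPconn.isPreconnected
    (fun t ht => (hlevel (x + ω y) ht).differentiableAt.differentiableWithinAt)
    (fun t ht => (hlevel (x + ω y) ht).deriv) hy hy₀
end

section
/- Persistence of non-degenerate periodic orbits: let P ⊆ ℝ be an open interval, q ≥ 1, ω_0, …, ω_{q−1} : P → ℝ C¹ functions, and f : ℝ → ℝ a C¹ function of period 1. For (x_0, y_0, ε) ∈ ℝ × P × ℝ define recursively x_{k+1} = x_k + ω_k(y_k) and y_{k+1} = y_k + ε f(x_{k+1}) for k = 0, …, q−1. Suppose (x_0*, y_0*) satisfies at ε = 0 (so that y_k = y_0* and x_k* = x_0* + Σ_{j<k} ω_j(y_0*)): (i) Σ_{k=0}^{q−1} ω_k(y_0*) ∈ ℤ, (ii) Σ_{k=0}^{q−1} f(x_k*) = 0, and (iii) the non-degeneracy condition (Σ_{k=0}^{q−1} f'(x_k*)) · (Σ_{k=0}^{q−1} ω_k'(y_0*)) ≠ 0. Then there exist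 ε_0 > 0 and a neighborhood U of (x_0*, y_0*) such that for every ε with |ε| < ε_0 there is a unique (x_0^ε, y_0^ε) ∈ U whose orbit satisfies x_q − x_0 ∈ ℤ and y_q = y_0, and (x_0^ε, y_0^ε) depends continuously (indeed C¹) on ε with (x_0^0, y_0^0) = (x_0*, y_0*). -/
/-!
At `ε = 0` the orbit is a rigid translation, so `(x₀*, y₀*)` solves the periodicity equations
`(x_q − x₀, Σ_{k=1}^{q} f(x_k)) = (m, 0)`, and the Jacobian of their left side in `(x₀, y₀)` is
triangular, `[[0, Σ ω_k'(y₀*)], [Σ f'(x_k*), ∗]]`; by (i) and the 1-periodicity of `f'` the sum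
over `k = 1, …, q` equals the one over `k = 0, …, q - 1`, so (iii) makes it invertible. The
implicit function theorem then gives a C¹ branch of solutions. Conversely a periodic point near
`(x₀*, y₀*)` has `x_q − x₀` an integer close to `m`, hence equal to it, and `y_q = y₀` is
automatic once `Σ f(x_k) = 0` because `y_q = y₀ + ε Σ_{k=1}^{q} f(x_k)`.
-/

noncomputable section

/-- The orbit of the perturbed family of translations:
`x_{k+1} = x_k + ω_k(y_k)`, `y_{k+1} = y_k + ε f(x_{k+1})`. -/
def orbit (ω : ℕ → ℝ → ℝ) (f : ℝ → ℝ) (ε x0 y0 : ℝ) : ℕ → ℝ × ℝ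
  | 0 => (x0, y0)
  | k + 1 =>
      let p := orbit ω f ε x0 y0 k
      (p.1 + ω k p.2, p.2 + ε * f (p.1 + ω k p.2))

/-- `(x₀, y₀) = p` is a q-periodic point of the perturbed map: `x_q − x₀ ∈ ℤ`,
`y_q = y₀`, and (the non-degenerate form of the latter) `Σ_{k=1}^{q} f(x_k) = 0`. -/
def IsPerOrbit (ω : ℕ → ℝ → ℝ) (f : ℝ → ℝ) (q : ℕ) (ε : ℝ) (p : ℝ × ℝ) : Prop :=
  (∃ m : ℤ, (orbit ω f ε p.1 p.2 q).1 - p.1 = (m : ℝ)) ∧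
  (orbit ω f ε p.1 p.2 q).2 = p.2 ∧
  (∑ k ∈ Finset.range q, f ((orbit ω f ε p.1 p.2 (k + 1)).1)) = 0

open Filter Topology

theorem Function.Periodic.deriv {𝕜 F : Type*} [NontriviallyNormedField 𝕜] [NormedAddCommGroup F]
    [NormedSpace 𝕜 F] {g : 𝕜 → F} {c : 𝕜} (hg : Function.Periodic g c) :
    Function.Periodic (deriv g) c := fun x => by
  rw [← deriv_comp_add_const, funext hg]

theorem Function.Periodic.sum_range_comp_add_partial_sum_succ {M : Type*} [AddCommGroup M]
    {g : ℝ → M} (hg : Function.Periodic g 1) (x : ℝ) {w : ℕ → ℝ} {q : ℕ} {m : ℤ}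
    (hw : ∑ j ∈ Finset.range q, w j = m) :
    ∑ k ∈ Finset.range q, g (x + ∑ j ∈ Finset.range (k + 1), w j) =
      ∑ k ∈ Finset.range q, g (x + ∑ j ∈ Finset.range k, w j) := by
  rw [← sub_eq_zero, ← Finset.sum_sub_distrib,
    Finset.sum_range_sub (fun k => g (x + ∑ j ∈ Finset.range k, w j)), hw, sub_eq_zero]
  simpa using hg.int_mul m x

theorem eventually_exists_int_eq_iff {X : Type*} [TopologicalSpace X] {g : X → ℝ} {u : X}
    (hg : ContinuousAt g u) {m : ℤ} (hu : g u = m) :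
    ∀ᶠ v in 𝓝 u, (∃ n : ℤ, g v = n) ↔ g v = m := by
  have hnear : ∀ᶠ v in 𝓝 u, |g v - m| < 1 := by
    simpa [hu, Real.dist_eq] using hg.eventually (Metric.ball_mem_nhds (g u) one_pos)
  filter_upwards [hnear] with v hv
  refine ⟨fun ⟨n, hn⟩ => ?_, fun h => ⟨m, h⟩⟩
  have : |n - m| < 1 := by rw [hn] at hv; exact_mod_cast hv
  rw [hn, sub_eq_zero.mp (Int.abs_lt_one_iff.mp this)]

open scoped ContDiff in
theorem exists_contDiffOn_Ioo_of_eventually_iff {E : Type*} [NormedAddCommGroup E]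
    [NormedSpace ℝ E] {n : WithTop ℕ∞} (hn : n ≠ ∞) {ψ : ℝ → E} {R : ℝ → E → Prop}
    (hψ : ContDiffAt ℝ n ψ 0) (hR : ∀ᶠ v in 𝓝 (0, ψ 0), R v.1 v.2 ↔ ψ v.1 = v.2) :
    ∃ ε0 > 0, ∃ U : Set E, IsOpen U ∧ ψ 0 ∈ U ∧ ContDiffOn ℝ n ψ (Set.Ioo (-ε0) ε0) ∧
      ∀ ε : ℝ, |ε| < ε0 → ψ ε ∈ U ∧ R ε (ψ ε) ∧ ∀ p ∈ U, R ε p → p = ψ ε := by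
  obtain ⟨S, U, hS, h0S, hU, hψU, hSU⟩ := mem_nhds_prod_iff'.mp hR
  have hev : ∀ᶠ ε in 𝓝 0, ε ∈ S ∧ ψ ε ∈ U ∧ ContDiffAt ℝ n ψ ε := by
    filter_upwards [hS.mem_nhds h0S, hψ.continuousAt.preimage_mem_nhds (hU.mem_nhds hψU),
      hψ.eventually hn] with ε hεS hψε hψC using ⟨hεS, hψε, hψC⟩
  obtain ⟨ε0, hε0, hball⟩ := Metric.eventually_nhds_iff.mp hev
  have hball' : ∀ ε : ℝ, |ε| < ε0 → ε ∈ S ∧ ψ ε ∈ U ∧ ContDiffAt ℝ n ψ ε := fun ε hε =>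
    hball (by simpa [Real.dist_eq] using hε)
  refine ⟨ε0, hε0, U, hU, hψU, fun ε hε => (hball' ε (abs_lt.mpr hε)).2.2.contDiffWithinAt,
    fun ε hε => ?_⟩
  obtain ⟨hεS, hψε, -⟩ := hball' ε hε
  have hRε : ∀ p ∈ U, R ε p ↔ ψ ε = p := fun p hp => @hSU (ε, p) ⟨hεS, hp⟩
  exact ⟨hψε, (hRε _ hψε).mpr rfl, fun p hp h => ((hRε p hp).mp h).symm⟩

theorem ContinuousLinearMap.isInvertible_of_apply_inl_of_fst_apply_inr
    {L : ℝ × ℝ →L[ℝ] ℝ × ℝ} {a b : ℝ} (ha : a ≠ 0) (hb : b ≠ 0)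
    (hL₁ : L (1, 0) = (0, b)) (hL₂ : (L (0, 1)).1 = a) : L.IsInvertible := by
  have hL : ∀ s t : ℝ, L (s, t) = s • L (1, 0) + t • L (0, 1) := fun s t => by
    rw [← map_smul, ← map_smul, ← map_add]; simp
  have hinj : Function.Injective L := by
    refine (injective_iff_map_eq_zero L).mpr fun ⟨s, t⟩ h => ?_
    rw [hL, hL₁, Prod.ext_iff] at h
    have ht : t = 0 := by simpa [hL₂, ha] using h.1
    subst ht
    simpa [hb] using h.2
  exact ⟨(LinearEquiv.ofInjectiveEndo L.toLinearMap hinj).toContinuousLinearEquiv, rfl⟩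

def periodicityMap (ω : ℕ → ℝ → ℝ) (f : ℝ → ℝ) (q : ℕ) (z : ℝ × ℝ × ℝ) : ℝ × ℝ :=
  ((orbit ω f z.1 z.2.1 z.2.2 q).1 - z.2.1,
    ∑ k ∈ Finset.range q, f (orbit ω f z.1 z.2.1 z.2.2 (k + 1)).1)

section PerturbedOrbit

variable (ω : ℕ → ℝ → ℝ) (f : ℝ → ℝ)

theorem orbit_succ (ε x y : ℝ) (k : ℕ) :
    orbit ω f ε x y (k + 1) =
      ((orbit ω f ε x y k).1 + ω k (orbit ω f ε x y k).2,
        (orbit ω f ε x y k).2 + ε * f ((orbit ω f ε x y k).1 + ω k (orbit ω f ε x y k).2)) :=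
  rfl

theorem orbit_snd (ε x y : ℝ) (k : ℕ) :
    (orbit ω f ε x y k).2 = y + ε * ∑ j ∈ Finset.range k, f (orbit ω f ε x y (j + 1)).1 := by
  induction k with
  | zero => simp [orbit]
  | succ k ih => rw [Finset.sum_range_succ, mul_add, ← add_assoc, ← ih]; rfl

theorem orbit_unperturbed (x y : ℝ) (k : ℕ) :
    orbit ω f 0 x y k = (x + ∑ j ∈ Finset.range k, ω j y, y) := by
  induction k with
  | zero => simp [orbit]
  | succ k ih => simp [orbit_succ, ih, Finset.sum_range_succ, add_assoc]

theorem contDiffAt_orbit {r : WithTop ℕ∞} (hf : ContDiff ℝ r f) {ε x y : ℝ} {n : ℕ}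
    (hω : ∀ k < n, ContDiffAt ℝ r (ω k) (orbit ω f ε x y k).2) :
    ContDiffAt ℝ r (fun z : ℝ × ℝ × ℝ => orbit ω f z.1 z.2.1 z.2.2 n) (ε, x, y) := by
  induction n with
  | zero => exact contDiffAt_snd
  | succ n ih =>
    have hn := ih fun k hk => hω k (hk.trans n.lt_succ_self)
    have hx := hn.fst.add ((hω n n.lt_succ_self).comp (ε, x, y) hn.snd)
    exact hx.prodMk (hn.snd.add (contDiffAt_fst.mul (hf.contDiffAt.comp (ε, x, y) hx)))

theorem isPerOrbit_iff_periodicityMap {q : ℕ} {ε : ℝ} {p : ℝ × ℝ} :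
    IsPerOrbit ω f q ε p ↔ ∃ m : ℤ, periodicityMap ω f q (ε, p) = ((m : ℝ), 0) := by
  simp only [IsPerOrbit, periodicityMap, Prod.ext_iff, orbit_snd]
  constructor
  · rintro ⟨⟨m, hm⟩, -, hs⟩
    exact ⟨m, hm, hs⟩
  · rintro ⟨m, hm, hs⟩
    exact ⟨⟨m, hm⟩, by simp [hs], hs⟩

theorem periodicityMap_unperturbed (q : ℕ) (x y : ℝ) :
    periodicityMap ω f q (0, x, y) =
      (∑ k ∈ Finset.range q, ω k y,
        ∑ k ∈ Finset.range q, f (x + ∑ j ∈ Finset.range (k + 1), ω j y)) := by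
  simp [periodicityMap, orbit_unperturbed]

theorem contDiffAt_periodicityMap {r : WithTop ℕ∞} (hf : ContDiff ℝ r f) {q : ℕ} {ε x y : ℝ}
    (hω : ∀ k < q, ContDiffAt ℝ r (ω k) (orbit ω f ε x y k).2) :
    ContDiffAt ℝ r (periodicityMap ω f q) (ε, x, y) :=
  ((contDiffAt_orbit ω f hf hω).fst.sub contDiffAt_snd.fst).prodMk <|
    ContDiffAt.sum fun _ hk => hf.contDiffAt.comp _ <|
      (contDiffAt_orbit ω f hf fun j hj => hω j (hj.trans_le (Finset.mem_range.mp hk))).fst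

theorem eventually_isPerOrbit_iff {q : ℕ} {u : ℝ × ℝ × ℝ}
    (hG : ContinuousAt (periodicityMap ω f q) u) {m : ℤ}
    (hu : periodicityMap ω f q u = ((m : ℝ), 0)) :
    ∀ᶠ v in 𝓝 u, IsPerOrbit ω f q v.1 v.2 ↔ periodicityMap ω f q v = periodicityMap ω f q u := by
  filter_upwards [eventually_exists_int_eq_iff hG.fst (congrArg Prod.fst hu)] with v hv
  simp only [isPerOrbit_iff_periodicityMap, Prod.mk.eta, hu, Prod.ext_iff, ← hv]
  exact ⟨fun ⟨n, h1, h2⟩ => ⟨⟨n, h1⟩, h2⟩, fun ⟨⟨n, h1⟩, h2⟩ => ⟨n, h1, h2⟩⟩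

theorem hasDerivAt_periodicityMap_unperturbed_initial_x (hf : Differentiable ℝ f) (q : ℕ)
    (x y : ℝ) :
    HasDerivAt (fun t => periodicityMap ω f q (0, t, y))
      (0, ∑ k ∈ Finset.range q, deriv f (x + ∑ j ∈ Finset.range (k + 1), ω j y)) x := by
  simp only [periodicityMap_unperturbed]
  exact (hasDerivAt_const _ _).prodMk <| HasDerivAt.fun_sum fun k _ =>
    (hf _).hasDerivAt.comp_add_const _ _

theorem hasDerivAt_fst_periodicityMap_unperturbed_initial_y {q : ℕ} {y : ℝ}
    (hω : ∀ k < q, DifferentiableAt ℝ (ω k) y) (x : ℝ) :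
    HasDerivAt (fun t => (periodicityMap ω f q (0, x, t)).1)
      (∑ k ∈ Finset.range q, deriv (ω k) y) y := by
  simp only [periodicityMap_unperturbed]
  exact HasDerivAt.fun_sum fun k hk => (hω k (Finset.mem_range.mp hk)).hasDerivAt

end PerturbedOrbit

theorem isInvertible_fderiv_comp_inr_of_partials {G : ℝ × ℝ × ℝ → ℝ × ℝ} {u : ℝ × ℝ × ℝ}
    (hG : DifferentiableAt ℝ G u) {a b : ℝ} (ha : a ≠ 0) (hb : b ≠ 0)
    (hx : HasDerivAt (fun t => G (u.1, t, u.2.2)) (0, b) u.2.1)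
    (hy : HasDerivAt (fun t => (G (u.1, u.2.1, t)).1) a u.2.2) :
    (fderiv ℝ G u ∘L .inr ℝ ℝ (ℝ × ℝ)).IsInvertible := by
  have hG' : HasFDerivAt G (fderiv ℝ G u) (u.1, u.2.1, u.2.2) := hG.hasFDerivAt
  have hcurve_x : HasDerivAt (fun t : ℝ => (u.1, t, u.2.2)) (0, 1, 0) u.2.1 :=
    (hasDerivAt_const _ _).prodMk ((hasDerivAt_id _).prodMk (hasDerivAt_const _ _))
  have hcurve_y : HasDerivAt (fun t : ℝ => (u.1, u.2.1, t)) (0, 0, 1) u.2.2 :=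
    (hasDerivAt_const _ _).prodMk ((hasDerivAt_const _ _).prodMk (hasDerivAt_id _))
  have hGfst : HasFDerivAt (fun v => (G v).1) (.fst ℝ ℝ ℝ ∘L fderiv ℝ G u) (u.1, u.2.1, u.2.2) :=
    hG'.fst
  have hGy := hGfst.comp_hasDerivAt u.2.2 hcurve_y
  exact ContinuousLinearMap.isInvertible_of_apply_inl_of_fst_apply_inr ha hb
    ((hG'.comp_hasDerivAt u.2.1 hcurve_x).unique hx) (hGy.unique hy)

theorem persistence_of_nondegenerate_periodic_orbits_general
    (P : Set ℝ) (hPopen : IsOpen P)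
    (q : ℕ)
    (ω : ℕ → ℝ → ℝ) (hω : ∀ k < q, ContDiffOn ℝ 1 (ω k) P)
    (f : ℝ → ℝ) (hf : ContDiff ℝ 1 f) (hfper : ∀ x, f (x + 1) = f x)
    (x0s y0s : ℝ) (hy0 : y0s ∈ P)
    -- (i) at ε = 0 the x-coordinate returns mod 1
    (h1 : ∃ m : ℤ, (∑ k ∈ Finset.range q, ω k y0s) = (m : ℝ))
    -- (ii) the sum of f along the unperturbed orbit x_k* = x₀* + Σ_{j<k} ω_j(y₀*) vanishes
    (h2 : (∑ k ∈ Finset.range q,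
            f (x0s + ∑ j ∈ Finset.range k, ω j y0s)) = 0)
    -- (iii) non-degeneracy
    (h3 : (∑ k ∈ Finset.range q,
            deriv f (x0s + ∑ j ∈ Finset.range k, ω j y0s)) *
          (∑ k ∈ Finset.range q, deriv (ω k) y0s) ≠ 0) :
    ∃ ε0 > (0 : ℝ), ∃ U : Set (ℝ × ℝ), IsOpen U ∧ (x0s, y0s) ∈ U ∧
      ∃ φ : ℝ → ℝ × ℝ,
        ContDiffOn ℝ 1 φ (Set.Ioo (-ε0) ε0) ∧
        φ 0 = (x0s, y0s) ∧
        ∀ ε : ℝ, |ε| < ε0 →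
          φ ε ∈ U ∧ IsPerOrbit ω f q ε (φ ε) ∧
          ∀ p ∈ U, IsPerOrbit ω f q ε p → p = φ ε := by
  obtain ⟨m, hm⟩ := h1
  obtain ⟨hb, ha⟩ := mul_ne_zero_iff.mp h3
  have hper : Function.Periodic f 1 := hfper
  have hωy0 : ∀ k < q, ContDiffAt ℝ 1 (ω k) y0s := fun k hk =>
    (hω k hk).contDiffAt (hPopen.mem_nhds hy0)
  have hG : ContDiffAt ℝ 1 (periodicityMap ω f q) (0, x0s, y0s) :=
    contDiffAt_periodicityMap ω f hf fun k hk => by simpa [orbit_unperturbed] using hωy0 k hk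
  have hGu : periodicityMap ω f q (0, x0s, y0s) = ((m : ℝ), 0) := by
    rw [periodicityMap_unperturbed, hm, hper.sum_range_comp_add_partial_sum_succ x0s hm, h2]
  have hinv : (fderiv ℝ (periodicityMap ω f q) (0, x0s, y0s) ∘L .inr ℝ ℝ (ℝ × ℝ)).IsInvertible :=
    isInvertible_fderiv_comp_inr_of_partials (hG.differentiableAt one_ne_zero) ha
      (by rwa [hper.deriv.sum_range_comp_add_partial_sum_succ x0s hm])
      (hasDerivAt_periodicityMap_unperturbed_initial_x ω f (hf.differentiable one_ne_zero) q
        x0s y0s)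
      (hasDerivAt_fst_periodicityMap_unperturbed_initial_y ω f
        (fun k hk => (hωy0 k hk).differentiableAt one_ne_zero) x0s)
  have hψ0 : hG.implicitFunction one_ne_zero hinv 0 = (x0s, y0s) :=
    hG.implicitFunction_apply_self one_ne_zero hinv
  obtain ⟨ε0, hε0, U, hU, hψU, hψC, hψ⟩ := exists_contDiffOn_Ioo_of_eventually_iff (by simp)
    (hG.contDiffAt_implicitFunction one_ne_zero hinv) (R := IsPerOrbit ω f q) <| by
      rw [hψ0]
      filter_upwards [eventually_isPerOrbit_iff ω f hG.continuousAt hGu,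
        hG.eventually_apply_eq_iff_implicitFunction one_ne_zero hinv] with v hv hv'
      exact hv.trans hv'
  exact ⟨ε0, hε0, U, hU, hψ0 ▸ hψU, _, hψC, hψ0, hψ⟩

theorem persistence_of_nondegenerate_periodic_orbits
    (P : Set ℝ) (hPopen : IsOpen P) (hPconn : P.OrdConnected)
    (q : ℕ) (hq : 1 ≤ q)
    (ω : ℕ → ℝ → ℝ) (hω : ∀ k < q, ContDiffOn ℝ 1 (ω k) P)
    (f : ℝ → ℝ) (hf : ContDiff ℝ 1 f) (hfper : ∀ x, f (x + 1) = f x)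
    (x0s y0s : ℝ) (hy0 : y0s ∈ P)
    -- (i) at ε = 0 the x-coordinate returns mod 1
    (h1 : ∃ m : ℤ, (∑ k ∈ Finset.range q, ω k y0s) = (m : ℝ))
    -- (ii) the sum of f along the unperturbed orbit x_k* = x₀* + Σ_{j<k} ω_j(y₀*) vanishes
    (h2 : (∑ k ∈ Finset.range q,
            f (x0s + ∑ j ∈ Finset.range k, ω j y0s)) = 0)
    -- (iii) non-degeneracy
    (h3 : (∑ k ∈ Finset.range q,
            deriv f (x0s + ∑ j ∈ Finset.range k, ω j y0s)) *
          (∑ k ∈ Finset.range q, deriv (ω k) y0s) ≠ 0) :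
    ∃ ε0 > (0 : ℝ), ∃ U : Set (ℝ × ℝ), IsOpen U ∧ (x0s, y0s) ∈ U ∧
      ∃ φ : ℝ → ℝ × ℝ,
        ContDiffOn ℝ 1 φ (Set.Ioo (-ε0) ε0) ∧
        φ 0 = (x0s, y0s) ∧
        ∀ ε : ℝ, |ε| < ε0 →
          φ ε ∈ U ∧ IsPerOrbit ω f q ε (φ ε) ∧
          ∀ p ∈ U, IsPerOrbit ω f q ε p → p = φ ε :=
  persistence_of_nondegenerate_periodic_orbits_general P hPopen q ω hω f hf hfper x0s y0s hy0 h1 h2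
    h3
end
end
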